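/- arXiv:2303.09265 — 7 statements merged into one kernel-verified Lean document; each statement's English description precedes it below -/
import Mathlib

section
/- Let p be an odd prime, q a power of p, n ≥ 1, a ∈ F_{q^n}*, and let ℓ : F_{q^n} → F_{q^n} be an F_p-linear map. Then the function f(x) = Tr(a·x^{q+1}) + ℓ(x²) is a planar function on F_{q^n} if and only if for all u, v ∈ F_{q^n}*, Tr(a·u^q·v^{1−q} + a·u·v^{q−1}) + 2·ℓ(u) ≠ 0. -/
/-!
Writing `q = p ^ m`, the map `x ↦ x ^ q` is additive, so `f (x + c) - f x = B c x + f c` where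
`B c x = Tr (a c^q x + a c x^q) + 2 ℓ (c x)` is additive in `x`. On a finite group, a translate of an
additive map is bijective iff the map has trivial kernel, so `f` is planar iff `B c x ≠ 0` for all
nonzero `c, x`. The substitution `(u, v) = (c x, x)` turns `B c x` into the expression of the
trace condition.
-/

open Finset Function

theorem sum_range_pow_pow_add {R : Type*} [CommSemiring R] {p : ℕ} [ExpChar R p] (m n : ℕ)
    (x y : R) :
    ∑ i ∈ range n, (x + y) ^ (p ^ m) ^ i =
      ∑ i ∈ range n, x ^ (p ^ m) ^ i + ∑ i ∈ range n, y ^ (p ^ m) ^ i := by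
  simp only [← pow_mul, add_pow_expChar_pow, sum_add_distrib]

theorem AddMonoidHom.bijective_add_const_iff {G : Type*} [AddGroup G] [Finite G] (L : G →+ G)
    (b : G) : Bijective (fun x => L x + b) ↔ Injective L := by
  rw [Finite.injective_iff_bijective]
  exact (Equiv.addRight b).bijective.of_comp_iff' L

section Polar

variable {F : Type*} [Field F] (p : ℕ) [ExpChar F p] (m : ℕ) (Tr ℓ : F →+ F) (a : F)

def polarHom (c : F) : F →+ F :=
  Tr.comp (AddMonoidHom.mulLeft (a * c ^ p ^ m) +
      (AddMonoidHom.mulLeft (a * c)).comp (iterateFrobenius F p m).toAddMonoidHom) +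
    2 • ℓ.comp (AddMonoidHom.mulLeft c)

variable {p m Tr ℓ a}

theorem polarHom_apply (c x : F) :
    polarHom p m Tr ℓ a c x = Tr (a * c ^ p ^ m * x + a * c * x ^ p ^ m) + 2 * ℓ (c * x) := by
  simp [polarHom, iterateFrobenius_def, two_nsmul, two_mul]

theorem sub_eq_polarHom_add (c x : F) :
    Tr (a * (x + c) ^ (p ^ m + 1)) + ℓ ((x + c) ^ 2) - (Tr (a * x ^ (p ^ m + 1)) + ℓ (x ^ 2)) =
      polarHom p m Tr ℓ a c x + (Tr (a * c ^ (p ^ m + 1)) + ℓ (c ^ 2)) := by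
  have hpow_succ : a * (x + c) ^ (p ^ m + 1) =
      a * x ^ (p ^ m + 1) + (a * c ^ p ^ m * x + a * c * x ^ p ^ m) + a * c ^ (p ^ m + 1) := by
    rw [pow_succ, add_pow_expChar_pow]; ring
  have hsq : (x + c) ^ 2 = x ^ 2 + (c * x + c * x) + c ^ 2 := by ring
  rw [polarHom_apply, hpow_succ, hsq]
  simp only [map_add]
  ring

theorem polarHom_mul_inv {u v : F} (hv : v ≠ 0) :
    polarHom p m Tr ℓ a (u * v⁻¹) v =
      Tr (a * u ^ p ^ m * (v ^ (p ^ m - 1))⁻¹ + a * u * v ^ (p ^ m - 1)) + 2 * ℓ u := by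
  have hpow : v ^ p ^ m = v ^ (p ^ m - 1) * v := by
    rw [← pow_succ, Nat.sub_add_cancel (expChar_pow_pos F p m)]
  have hvq : v ^ (p ^ m - 1) ≠ 0 := pow_ne_zero _ hv
  rw [polarHom_apply, inv_mul_cancel_right₀ hv, mul_pow, inv_pow, hpow]
  congr 2
  field_simp

theorem planar_iff_polarHom_injective [Finite F] (f : F → F)
    (hf : ∀ x, f x = Tr (a * x ^ (p ^ m + 1)) + ℓ (x ^ 2)) :
    (∀ c : F, c ≠ 0 → Bijective (fun x => f (x + c) - f x)) ↔
      ∀ c : F, c ≠ 0 → Injective (polarHom p m Tr ℓ a c) := by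
  simp only [hf, sub_eq_polarHom_add, AddMonoidHom.bijective_add_const_iff]

theorem planar_iff_forall_trace_ne_zero [Finite F] (f : F → F)
    (hf : ∀ x, f x = Tr (a * x ^ (p ^ m + 1)) + ℓ (x ^ 2)) :
    (∀ c : F, c ≠ 0 → Bijective (fun x => f (x + c) - f x)) ↔
      ∀ u v : F, u ≠ 0 → v ≠ 0 →
        Tr (a * u ^ p ^ m * (v ^ (p ^ m - 1))⁻¹ + a * u * v ^ (p ^ m - 1)) + 2 * ℓ u ≠ 0 := by
  simp only [planar_iff_polarHom_injective f hf, injective_iff_map_eq_zero]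
  constructor
  · intro h u v hu hv hzero
    exact hv (h _ (mul_ne_zero hu (inv_ne_zero hv)) v (by rwa [polarHom_mul_inv hv]))
  · intro h c hc x hzero
    by_contra hx
    apply h (c * x) x (mul_ne_zero hc hx) hx
    rwa [← polarHom_mul_inv hx, mul_inv_cancel_right₀ hx]

end Polar

theorem planar_iff_trace_condition_general
    (p m n : ℕ) (hp : p.Prime)
    (q : ℕ) (hq : q = p ^ m)
    (F : Type*) [Field F] [Fintype F] (hF : Fintype.card F = q ^ n)
    (a : F)
    (ℓ : F → F) (hℓ : ∀ x y, ℓ (x + y) = ℓ x + ℓ y)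
    (Tr : F → F) (hTr : ∀ x, Tr x = ∑ i ∈ Finset.range n, x ^ q ^ i)
    (f : F → F) (hf : ∀ x, f x = Tr (a * x ^ (q + 1)) + ℓ (x ^ 2)) :
    (∀ c : F, c ≠ 0 → Function.Bijective (fun x => f (x + c) - f x)) ↔
      (∀ u v : F, u ≠ 0 → v ≠ 0 →
        Tr (a * u ^ q * (v ^ (q - 1))⁻¹ + a * u * v ^ (q - 1)) + 2 * ℓ u ≠ 0) := by
  subst hq
  have : Fact p.Prime := ⟨hp⟩
  have : CharP F p := charP_of_card_eq_prime_pow (f := m * n) (by rw [hF, pow_mul])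
  have hTr_add (x y : F) : Tr (x + y) = Tr x + Tr y := by
    simp only [hTr, sum_range_pow_pow_add]
  exact planar_iff_forall_trace_ne_zero (Tr := AddMonoidHom.mk' Tr hTr_add)
    (ℓ := AddMonoidHom.mk' ℓ hℓ) f hf

/-- `f(x) = Tr(a·x^{q+1}) + ℓ(x²)` is planar on `F_{q^n}` iff
`Tr(a·u^q·v^{1−q} + a·u·v^{q−1}) + 2·ℓ(u) ≠ 0` for all nonzero `u, v`. -/
theorem planar_iff_trace_condition
    (p m n : ℕ) (hp : p.Prime) (hodd : Odd p) (hm : 0 < m) (hn : 1 ≤ n)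
    (q : ℕ) (hq : q = p ^ m)
    (F : Type*) [Field F] [Fintype F] (hF : Fintype.card F = q ^ n)
    (a : F) (ha : a ≠ 0)
    (ℓ : F → F) (hℓ : ∀ x y, ℓ (x + y) = ℓ x + ℓ y)
    (Tr : F → F) (hTr : ∀ x, Tr x = ∑ i ∈ Finset.range n, x ^ q ^ i)
    (f : F → F) (hf : ∀ x, f x = Tr (a * x ^ (q + 1)) + ℓ (x ^ 2)) :
    (∀ c : F, c ≠ 0 → Function.Bijective (fun x => f (x + c) - f x)) ↔
      (∀ u v : F, u ≠ 0 → v ≠ 0 →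
        Tr (a * u ^ q * (v ^ (q - 1))⁻¹ + a * u * v ^ (q - 1)) + 2 * ℓ u ≠ 0) :=
  planar_iff_trace_condition_general p m n hp q hq F hF a ℓ hℓ Tr hTr f hf
end

section
/- Let p be an odd prime, q a power of p, and let ℓ : F_{q²} → F_{q²} be an F_p-linear map. Suppose the function x^{q+1} + ℓ(x²) is planar on F_{q²}. Then the kernel of ℓ has at most q elements; moreover, if ℓ(F_{q²}) ∩ F_q = {0}, then the kernel of ℓ has exactly q elements. -/
/-!
On `ker ℓ` the difference `f (x + 1) - f x` equals `x ^ q + x + 1 + ℓ 1`, so planarity makes the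
trace `x ↦ x ^ q + x` injective on `ker ℓ`; the trace takes values in `𝔽_q`, hence `|ker ℓ| ≤ q`.
If `ℓ(F) ∩ 𝔽_q = 0`, the sum `ℓ(F) + 𝔽_q` is direct, so `|ℓ(F)| ≤ q` and rank–nullity gives
`|ker ℓ| ≥ q`. That `|𝔽_q| = q` also comes from the trace: its kernel consists of roots of
`X ^ q + X`, and `q² = |image| · |kernel|`.
-/

open Polynomial

lemma card_pow_eq_mul_le {K : Type*} [Field K] [Fintype K] {n : ℕ} (hn : 2 ≤ n) (c : K) :
    Nat.card {z : K // z ^ n = c * z} ≤ n := by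
  classical
  set P : K[X] := X ^ n - C c * X
  have hdeg : P.natDegree = n := by
    rw [natDegree_sub_eq_left_of_natDegree_lt] <;> rw [natDegree_X_pow]
    exact (natDegree_C_mul_le c X).trans_lt (by rw [natDegree_X]; omega)
  have hP0 : P ≠ 0 := ne_zero_of_natDegree_gt (n := 0) (by omega)
  rw [Nat.card_eq_fintype_card, Fintype.card_subtype, ← hdeg]
  refine card_le_degree_of_subset_roots fun z hz => ?_
  rw [Finset.mem_val, Finset.mem_filter, hdeg] at hz
  simp [P, mem_roots hP0, hz.2]

lemma two_le_of_card_eq_sq {K : Type*} [Fintype K] [Nontrivial K] {q : ℕ}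
    (hK : Fintype.card K = q ^ 2) : 2 ≤ q :=
  (Nat.one_lt_pow_iff two_ne_zero).1 (hK ▸ Fintype.one_lt_card)

namespace AddMonoidHom

variable {G H : Type*} [AddGroup G] [AddGroup H]

lemma card_eq_card_range_mul_card_ker (f : G →+ H) :
    Nat.card G = Nat.card f.range * Nat.card f.ker := by
  rw [← AddSubgroup.index_ker, f.ker.index_mul_card]

end AddMonoidHom

lemma AddSubgroup.card_mul_card_le_of_disjoint {G : Type*} [AddGroup G] [Finite G]
    {A B : AddSubgroup G} (h : Disjoint A B) : Nat.card A * Nat.card B ≤ Nat.card G :=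
  Nat.card_prod A B ▸ Nat.card_le_card_of_injective _ (AddSubgroup.add_injective_of_disjoint h)

section Frobenius

variable (F : Type*) [Field F] (p : ℕ) [ExpChar F p] (n : ℕ)

def frobeniusFixed : AddSubgroup F :=
  ((iterateFrobenius F p n).toAddMonoidHom - AddMonoidHom.id F).ker

/-- `x ↦ x ^ q + x`, the trace of `𝔽_{q²}/𝔽_q` when `|F| = q²` with `q = p ^ n`. -/
def frobeniusTrace : F →+ F :=
  (iterateFrobenius F p n).toAddMonoidHom + AddMonoidHom.id F

variable {F p n}

@[simp]
lemma mem_frobeniusFixed {z : F} : z ∈ frobeniusFixed F p n ↔ z ^ p ^ n = z := by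
  simp [frobeniusFixed, iterateFrobenius_def, sub_eq_zero]

@[simp]
lemma frobeniusTrace_apply (x : F) : frobeniusTrace F p n x = x ^ p ^ n + x := by
  simp [frobeniusTrace, iterateFrobenius_def]

variable (ℓ : F →+ F)

lemma sub_shift_one_eq_of_mem_ker {x : F} (hx : x ∈ ℓ.ker) :
    (x + 1) ^ (p ^ n + 1) + ℓ ((x + 1) ^ 2) - (x ^ (p ^ n + 1) + ℓ (x ^ 2)) =
      frobeniusTrace F p n x + 1 + ℓ 1 := by
  have hsq : (x + 1) ^ 2 = x ^ 2 + x + x + 1 := by ring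
  rw [AddMonoidHom.mem_ker] at hx
  rw [hsq, map_add, map_add, map_add, hx, pow_succ, pow_succ, add_pow_expChar_pow, one_pow,
    frobeniusTrace_apply]
  ring

variable [Fintype F] (hF : Fintype.card F = (p ^ n) ^ 2)
include hF

lemma range_frobeniusTrace_le : (frobeniusTrace F p n).range ≤ frobeniusFixed F p n := by
  rintro _ ⟨x, rfl⟩
  rw [frobeniusTrace_apply, mem_frobeniusFixed, add_pow_expChar_pow, ← pow_mul, ← sq, ← hF,
    FiniteField.pow_card, add_comm]

lemma card_ker_frobeniusTrace_le : Nat.card (frobeniusTrace F p n).ker ≤ p ^ n :=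
  calc Nat.card (frobeniusTrace F p n).ker = Nat.card {z : F // z ^ p ^ n = -1 * z} :=
        Nat.card_congr (Equiv.subtypeEquivRight fun z => by simp [eq_neg_iff_add_eq_zero])
    _ ≤ p ^ n := card_pow_eq_mul_le (two_le_of_card_eq_sq hF) (-1)

lemma card_frobeniusFixed : Nat.card (frobeniusFixed F p n) = p ^ n := by
  have hq := two_le_of_card_eq_sq hF
  refine le_antisymm ?_ ?_
  · calc Nat.card (frobeniusFixed F p n) = Nat.card {z : F // z ^ p ^ n = 1 * z} :=
          Nat.card_congr (Equiv.subtypeEquivRight fun z => by simp)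
      _ ≤ p ^ n := card_pow_eq_mul_le hq 1
  · refine Nat.le_of_mul_le_mul_right ?_ (by omega : 0 < p ^ n)
    calc p ^ n * p ^ n = Nat.card F := by rw [Nat.card_eq_fintype_card, hF, sq]
      _ = Nat.card (frobeniusTrace F p n).range * Nat.card (frobeniusTrace F p n).ker :=
        (frobeniusTrace F p n).card_eq_card_range_mul_card_ker
      _ ≤ Nat.card (frobeniusFixed F p n) * p ^ n :=
        Nat.mul_le_mul (AddSubgroup.card_le_of_le (range_frobeniusTrace_le hF))
          (card_ker_frobeniusTrace_le hF)

lemma card_ker_le_card_frobeniusFixed (hD : Function.Injective fun x =>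
      (x + 1) ^ (p ^ n + 1) + ℓ ((x + 1) ^ 2) - (x ^ (p ^ n + 1) + ℓ (x ^ 2))) :
    Nat.card ℓ.ker ≤ Nat.card (frobeniusFixed F p n) := by
  refine Nat.card_le_card_of_injective
    (fun x => ⟨frobeniusTrace F p n x, range_frobeniusTrace_le hF ⟨x, rfl⟩⟩)
    fun x y hxy => Subtype.ext (hD ?_)
  have hT : frobeniusTrace F p n x = frobeniusTrace F p n y := congrArg Subtype.val hxy
  simp only [sub_shift_one_eq_of_mem_ker ℓ x.2, sub_shift_one_eq_of_mem_ker ℓ y.2, hT]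

lemma le_card_ker_of_disjoint (h : Disjoint ℓ.range (frobeniusFixed F p n)) :
    p ^ n ≤ Nat.card ℓ.ker := by
  have hq : 0 < p ^ n := by linarith [two_le_of_card_eq_sq hF]
  have hcard : Nat.card F = p ^ n * p ^ n := by rw [Nat.card_eq_fintype_card, hF, sq]
  have hrange : Nat.card ℓ.range ≤ p ^ n := by
    have := AddSubgroup.card_mul_card_le_of_disjoint h
    rw [card_frobeniusFixed hF, hcard] at this
    exact Nat.le_of_mul_le_mul_right this hq
  refine Nat.le_of_mul_le_mul_left ?_ hq
  calc p ^ n * p ^ n = Nat.card ℓ.range * Nat.card ℓ.ker :=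
        hcard ▸ ℓ.card_eq_card_range_mul_card_ker
    _ ≤ p ^ n * Nat.card ℓ.ker := Nat.mul_le_mul_right _ hrange

end Frobenius

theorem kernel_card_of_planar_general
    (p m : ℕ) (hp : p.Prime)
    (q : ℕ) (hq : q = p ^ m)
    (F : Type*) [Field F] [Fintype F] (hF : Fintype.card F = q ^ 2)
    (ℓ : F → F) (hℓ : ∀ x y, ℓ (x + y) = ℓ x + ℓ y)
    (f : F → F) (hf : ∀ x, f x = x ^ (q + 1) + ℓ (x ^ 2))
    (hplanar : ∀ c : F, c ≠ 0 → Function.Bijective (fun x => f (x + c) - f x)) :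
    Nat.card {x : F // ℓ x = 0} ≤ q ∧
      ((∀ x : F, (ℓ x) ^ q = ℓ x → ℓ x = 0) → Nat.card {x : F // ℓ x = 0} = q) := by
  subst hq
  have : Fact p.Prime := ⟨hp⟩
  have : CharP F p := charP_of_card_eq_prime_pow (hF.trans (pow_mul p m 2).symm)
  let L : F →+ F := AddMonoidHom.mk' ℓ hℓ
  have hker : Nat.card {x : F // ℓ x = 0} = Nat.card L.ker := rfl
  have hD : Function.Injective fun x =>
      (x + 1) ^ (p ^ m + 1) + L ((x + 1) ^ 2) - (x ^ (p ^ m + 1) + L (x ^ 2)) := by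
    have h := (hplanar 1 one_ne_zero).injective
    simp only [hf] at h
    exact h
  have hle : Nat.card L.ker ≤ p ^ m :=
    (card_ker_le_card_frobeniusFixed L hF hD).trans (card_frobeniusFixed hF).le
  refine ⟨hker ▸ hle, fun hfix => hker ▸ hle.antisymm (le_card_ker_of_disjoint L hF ?_)⟩
  rw [AddSubgroup.disjoint_def]
  rintro _ ⟨x, rfl⟩ hx
  exact hfix x (mem_frobeniusFixed.1 hx)

/-- if `x^{q+1} + ℓ(x²)` is planar on `F_{q²}` then `ℓ` has at most `q`
roots, and exactly `q` roots if moreover `ℓ(F_{q²}) ∩ F_q = {0}`. -/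
theorem kernel_card_of_planar
    (p m : ℕ) (hp : p.Prime) (hodd : Odd p) (hm : 0 < m)
    (q : ℕ) (hq : q = p ^ m)
    (F : Type*) [Field F] [Fintype F] (hF : Fintype.card F = q ^ 2)
    (ℓ : F → F) (hℓ : ∀ x y, ℓ (x + y) = ℓ x + ℓ y)
    (f : F → F) (hf : ∀ x, f x = x ^ (q + 1) + ℓ (x ^ 2))
    (hplanar : ∀ c : F, c ≠ 0 → Function.Bijective (fun x => f (x + c) - f x)) :
    Nat.card {x : F // ℓ x = 0} ≤ q ∧
      ((∀ x : F, (ℓ x) ^ q = ℓ x → ℓ x = 0) → Nat.card {x : F // ℓ x = 0} = q) :=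
  kernel_card_of_planar_general p m hp q hq F hF ℓ hℓ f hf hplanar
end

section
/- Let p be an odd prime, k ≥ 1, q = p^{2k}, and δ ∈ F_q*. Then u^{2·p^k} − δ·u² is a nonzero square in F_q for every u ∈ F_q* if and only if p^k ≡ 1 (mod 4) and δ^{(p^k+1)/2} = −1. -/
/-!
Let `s = p ^ k` and `c = (s + 1) / 2`, so that `#F - 1 = 2 (s - 1) c`. Since
`u ^ (2s) - δ u ^ 2 = u ^ 2 (u ^ (2(s-1)) - δ)` and `u ^ (2(s-1))` runs over the `c`-th roots of
unity `μ_c` as `u` runs over `Fˣ`, Euler's criterion turns the condition into: `x - δ` is a nonzero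
square for every `x ∈ μ_c`. On `μ_c` we have `x ^ s = x⁻¹`, so the Frobenius gives
`x (x - δ) ^ s = 1 - δ ^ s x`, and the condition becomes `x ≠ δ` and
`(1 - δ ^ s x) ^ c = (x - δ) ^ c` for all `x ∈ μ_c`.

If this holds, the polynomial `(1 - δ ^ s X) ^ c - (X - δ) ^ c` of degree at most `c` vanishes on the
`c` points of `μ_c`, hence is a multiple of `X ^ c - 1`; its linear coefficient
`-c (δ ^ s + (-δ) ^ (c - 1))` therefore vanishes, which forces `(-δ) ^ c = 1`, and `δ ∉ μ_c` then
forces `c` to be odd. Conversely, if `c` is odd and `δ ^ c = -1`, then `δ ^ (s + 1) = 1`, so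
`1 - δ ^ s x = -δ ^ s (x - δ)`, whose `c`-th power is `(x - δ) ^ c`.
-/

open Polynomial

theorem Nat.mul_self_sub_one_eq_of_two_mul_eq_succ {s c : ℕ} (hc : 2 * c = s + 1) :
    s * s - 1 = 2 * (s - 1) * c := by
  obtain ⟨c, rfl⟩ : ∃ c', c = c' + 1 := ⟨c - 1, by omega⟩
  obtain rfl : s = 2 * c + 1 := by omega
  rw [Nat.add_sub_cancel]
  have : (2 * c + 1) * (2 * c + 1) = 2 * (2 * c) * (c + 1) + 1 := by ring
  omega

theorem Polynomial.eq_C_mul_X_pow_sub_one_of_eval_eq_zero {R : Type*} [CommRing R] [IsDomain R]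
    {f : R[X]} {n : ℕ} {ζ : R} (hζ : IsPrimitiveRoot ζ n) (hn : 0 < n) (hdeg : f.natDegree ≤ n)
    (hf : ∀ x : R, x ^ n = 1 → f.eval x = 0) : f = C (f.coeff n) * (X ^ n - 1) := by
  rw [← sub_eq_zero]
  refine eq_zero_of_natDegree_lt_card_of_eval_eq_zero' _ (nthRootsFinset n (1 : R)) ?_ ?_
  · intro x hx
    rw [mem_nthRootsFinset hn] at hx
    simp [hf x hx, hx]
  · rw [hζ.card_nthRootsFinset]
    have hle : (f - C (f.coeff n) * (X ^ n - 1)).natDegree ≤ n :=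
      (natDegree_sub_le _ _).trans (max_le hdeg (by compute_degree))
    have := natDegree_le_pred hle (by simp [coeff_X_pow, coeff_one, hn.ne'])
    omega

theorem mul_sub_pow_char_pow_of_pow_succ_eq_one {R : Type*} [CommRing R] {p k : ℕ}
    [Fact p.Prime] [CharP R p] {x : R} (hx : x ^ (p ^ k + 1) = 1) (δ : R) :
    x * (x - δ) ^ p ^ k = 1 - δ ^ p ^ k * x := by
  rw [sub_pow_char_pow, mul_sub, ← pow_succ', hx, mul_comm]

theorem odd_and_pow_eq_neg_one_of_forall_pow_eq_one {R : Type*} [CommRing R] [IsDomain R]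
    {s c : ℕ} (hc : 2 * c = s + 1) (hs : (s : R) = 0) {ζ : R} (hζ : IsPrimitiveRoot ζ c) {δ : R}
    (hδ : δ ≠ 0) (h : ∀ x : R, x ^ c = 1 → x ≠ δ ∧ (1 - δ ^ s * x) ^ c = (x - δ) ^ c) :
    Odd c ∧ δ ^ c = -1 := by
  have hcR : (c : R) ≠ 0 := by
    intro h0
    have := congrArg (Nat.cast : ℕ → R) hc
    push_cast [hs, h0] at this
    simp at this
  have hc2 : 2 ≤ c := by
    have : s ≠ 1 := by rintro rfl; simp at hs
    have : c ≠ 0 := by rintro rfl; simp at hcR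
    omega
  have hf := eq_C_mul_X_pow_sub_one_of_eval_eq_zero
    (f := (1 - C (δ ^ s) * X) ^ c - (X - C δ) ^ c) hζ (by omega) (by compute_degree)
    (fun x hx => by simp [(h x hx).2])
  have hlin : -δ ^ s = (-δ) ^ (c - 1) := by
    have := congrArg (fun g => (derivative g).eval 0) hf
    simp only [map_pow, derivative_pow, map_natCast, derivative_one, derivative_mul,
      derivative_C, mul_zero, zero_mul, derivative_X, mul_one, zero_add, zero_sub, mul_neg, sub_zero,
      eval_sub, eval_neg, eval_mul, eval_natCast, eval_pow, eval_one, eval_C, eval_X, one_pow,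
      coeff_sub, map_sub, sub_self] at this
    rw [zero_pow (by omega), mul_zero, mul_zero] at this
    have : (c : R) * (-δ ^ s - (-δ) ^ (c - 1)) = 0 := by linear_combination this
    exact sub_eq_zero.mp ((mul_eq_zero.mp this).resolve_left hcR)
  have hneg : (-δ) ^ c = 1 := by
    have hsodd : Odd s := ⟨c - 1, by omega⟩
    have hsq : (-δ) ^ c * (-δ) ^ c = (-δ) ^ c :=
      calc (-δ) ^ c * (-δ) ^ c = (-δ) ^ (s + 1) := by rw [← pow_add, ← two_mul, hc]
        _ = (-δ) ^ (c - 1 + 1) := by rw [pow_succ, pow_succ, hsodd.neg_pow, hlin]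
        _ = (-δ) ^ c := by rw [Nat.sub_add_cancel (by omega)]
    exact (mul_eq_right₀ (pow_ne_zero c (neg_ne_zero.mpr hδ))).mp hsq
  have hδc : δ ^ c ≠ 1 := fun h1 => (h δ h1).1 rfl
  have hcodd : Odd c := by
    by_contra hev
    rw [Nat.not_odd_iff_even] at hev
    exact hδc (by rwa [hev.neg_pow] at hneg)
  refine ⟨hcodd, ?_⟩
  rw [hcodd.neg_pow] at hneg
  linear_combination -hneg

theorem forall_pow_eq_one_of_pow_eq_neg_one {R : Type*} [CommRing R] [Nontrivial R]
    (hR : ringChar R ≠ 2) {s c : ℕ} (hc : 2 * c = s + 1) (hcodd : Odd c) {δ : R}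
    (hδ : δ ^ c = -1) : ∀ x : R, x ^ c = 1 → x ≠ δ ∧ (1 - δ ^ s * x) ^ c = (x - δ) ^ c := by
  intro x hx
  refine ⟨by rintro rfl; exact Ring.neg_one_ne_one_of_char_ne_two hR (hδ.symm.trans hx), ?_⟩
  have hδs : δ ^ (s + 1) = 1 := by rw [← hc, pow_mul', hδ, neg_one_sq]
  have hsodd : Odd s := ⟨c - 1, by omega⟩
  calc (1 - δ ^ s * x) ^ c = (-δ ^ s * (x - δ)) ^ c := by congr 1; linear_combination -hδs
    _ = (x - δ) ^ c := by
      rw [mul_pow, hcodd.neg_pow, ← pow_mul, mul_comm s c, pow_mul, hδ, hsodd.neg_one_pow, neg_neg,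
        one_mul]

namespace FiniteField

variable {F : Type*} [Field F] [Fintype F]

theorem exists_isPrimitiveRoot_card_sub_one : ∃ ζ : F, IsPrimitiveRoot ζ (Fintype.card F - 1) := by
  classical
  obtain ⟨g, hg⟩ := IsCyclic.exists_ofOrder_eq_natCard (α := Fˣ)
  refine ⟨g, ?_⟩
  rw [IsPrimitiveRoot.coe_units_iff, ← Fintype.card_units, ← Nat.card_eq_fintype_card, ← hg]
  exact IsPrimitiveRoot.orderOf g

theorem pow_eq_one_iff_exists_pow_eq {m n : ℕ} (hmn : Fintype.card F - 1 = m * n) {x : F} :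
    x ^ n = 1 ↔ ∃ u : F, u ≠ 0 ∧ u ^ m = x := by
  constructor
  · intro hx
    have hpos : 0 < m * n := hmn ▸ Nat.sub_pos_of_lt Fintype.one_lt_card
    have : NeZero n := ⟨(Nat.pos_of_mul_pos_left hpos).ne'⟩
    obtain ⟨ζ, hζ⟩ := exists_isPrimitiveRoot_card_sub_one (F := F)
    obtain ⟨i, -, rfl⟩ := (hζ.pow (hmn ▸ hpos) hmn).eq_pow_of_pow_eq_one hx
    refine ⟨ζ ^ i, pow_ne_zero i (hζ.ne_zero (hmn ▸ hpos.ne')), ?_⟩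
    rw [← pow_mul, ← pow_mul, mul_comm]
  · rintro ⟨u, hu, rfl⟩
    rw [← pow_mul, ← hmn, pow_card_sub_one_eq_one u hu]

theorem exists_ne_zero_sq_eq_iff (hF : ringChar F ≠ 2) {w : F} :
    (∃ b : F, b ≠ 0 ∧ b ^ 2 = w) ↔ w ≠ 0 ∧ w ^ (Fintype.card F / 2) = 1 := by
  constructor
  · rintro ⟨b, hb, rfl⟩
    refine ⟨pow_ne_zero 2 hb, ?_⟩
    rw [← pow_mul, Nat.two_mul_odd_div_two (odd_card_of_char_ne_two hF),
      pow_card_sub_one_eq_one b hb]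
  · rintro ⟨hw, hwe⟩
    obtain ⟨b, rfl⟩ := (isSquare_iff hF hw).mpr hwe
    exact ⟨b, left_ne_zero_of_mul hw, sq b⟩

variable {p k c : ℕ} [Fact p.Prime] [CharP F p]

theorem sub_pow_card_div_two_eq_one_iff (hF : Fintype.card F = p ^ k * p ^ k)
    (hc : 2 * c = p ^ k + 1) {x δ : F} (hx : x ^ c = 1) (hxδ : x ≠ δ) :
    (x - δ) ^ (Fintype.card F / 2) = 1 ↔ (1 - δ ^ p ^ k * x) ^ c = (x - δ) ^ c := by
  have hs : 1 ≤ p ^ k := Nat.one_le_pow _ _ (Fact.out : p.Prime).pos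
  have hhalf : Fintype.card F / 2 = (p ^ k - 1) * c := by
    have hsub := Nat.mul_self_sub_one_eq_of_two_mul_eq_succ hc
    have : 1 ≤ p ^ k * p ^ k := Nat.mul_le_mul hs hs
    rw [mul_assoc] at hsub
    omega
  have hxs : x ^ (p ^ k + 1) = 1 := by rw [← hc, pow_mul', hx, one_pow]
  have hsc : p ^ k * c = (p ^ k - 1) * c + c := by
    rw [← Nat.succ_mul, Nat.succ_eq_add_one, Nat.sub_add_cancel hs]
  rw [hhalf, ← mul_sub_pow_char_pow_of_pow_succ_eq_one hxs, mul_pow, hx, one_mul, ← pow_mul, hsc,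
    pow_add, mul_eq_right₀ (pow_ne_zero _ (sub_ne_zero.mpr hxδ))]

theorem forall_exists_sq_eq_iff (hF2 : ringChar F ≠ 2) (hF : Fintype.card F = p ^ k * p ^ k)
    (hc : 2 * c = p ^ k + 1) (δ : F) :
    (∀ u : F, u ≠ 0 → ∃ b : F, b ≠ 0 ∧ b ^ 2 = u ^ (2 * p ^ k) - δ * u ^ 2) ↔
      ∀ x : F, x ^ c = 1 → x ≠ δ ∧ (1 - δ ^ p ^ k * x) ^ c = (x - δ) ^ c := by
  have hs : 1 ≤ p ^ k := Nat.one_le_pow _ _ (Fact.out : p.Prime).pos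
  have factor (u : F) (hu : u ≠ 0) : (∃ b : F, b ≠ 0 ∧ b ^ 2 = u ^ (2 * p ^ k) - δ * u ^ 2) ↔
      u ^ (2 * (p ^ k - 1)) ≠ δ ∧ (u ^ (2 * (p ^ k - 1)) - δ) ^ (Fintype.card F / 2) = 1 := by
    have hsplit : u ^ (2 * p ^ k) - δ * u ^ 2 = u ^ 2 * (u ^ (2 * (p ^ k - 1)) - δ) := by
      rw [mul_sub, ← pow_add, mul_comm δ, show 2 + 2 * (p ^ k - 1) = 2 * p ^ k by omega]
    have hu2 := ((exists_ne_zero_sq_eq_iff hF2).mp ⟨u, hu, rfl⟩).2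
    rw [exists_ne_zero_sq_eq_iff hF2, hsplit, mul_ne_zero_iff, mul_pow, hu2, one_mul, sub_ne_zero]
    exact and_congr_left' (and_iff_right (pow_ne_zero 2 hu))
  have hmc : Fintype.card F - 1 = 2 * (p ^ k - 1) * c :=
    hF ▸ Nat.mul_self_sub_one_eq_of_two_mul_eq_succ hc
  calc _ ↔ ∀ u : F, u ≠ 0 → u ^ (2 * (p ^ k - 1)) ≠ δ ∧
        (u ^ (2 * (p ^ k - 1)) - δ) ^ (Fintype.card F / 2) = 1 := forall₂_congr factor
    _ ↔ ∀ x : F, x ^ c = 1 → x ≠ δ ∧ (x - δ) ^ (Fintype.card F / 2) = 1 := by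
      simp_rw [pow_eq_one_iff_exists_pow_eq hmc]
      simp only [forall_exists_index, and_imp, forall_apply_eq_imp_iff₂]
    _ ↔ _ := forall₂_congr fun x hx =>
      and_congr_right fun hxδ => sub_pow_card_div_two_eq_one_iff hF hc hx hxδ

end FiniteField

/-- in `F_q` with `q = p^{2k}` and `δ ≠ 0`, the element
`u^{2p^k} − δ·u²` is a nonzero square for every `u ≠ 0` iff `p^k ≡ 1 (mod 4)`
and `δ^{(p^k+1)/2} = −1`. -/
theorem nonzero_square_iff_delta_condition
    (p k : ℕ) (hp : p.Prime) (hodd : Odd p) (hk : 0 < k)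
    (q : ℕ) (hq : q = p ^ (2 * k))
    (F : Type*) [Field F] [Fintype F] (hF : Fintype.card F = q)
    (δ : F) (hδ : δ ≠ 0) :
    (∀ u : F, u ≠ 0 → ∃ b : F, b ≠ 0 ∧ b ^ 2 = u ^ (2 * p ^ k) - δ * u ^ 2) ↔
      (p ^ k % 4 = 1 ∧ δ ^ ((p ^ k + 1) / 2) = -1) := by
  have := Fact.mk hp
  have : CharP F p := charP_of_card_eq_prime_pow (hF.trans hq)
  have hF2 : ringChar F ≠ 2 := by
    rw [ringChar.eq F p]
    rintro rfl
    exact Nat.not_odd_iff_even.mpr even_two hodd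
  have hcard : Fintype.card F = p ^ k * p ^ k := by rw [hF, hq, two_mul, pow_add]
  obtain ⟨c, hc⟩ : ∃ c, 2 * c = p ^ k + 1 := by
    obtain ⟨c, hc⟩ := hodd.pow (n := k).add_one
    exact ⟨c, by omega⟩
  obtain ⟨ζ, hζ⟩ := FiniteField.exists_isPrimitiveRoot_card_sub_one (F := F)
  have hζc := hζ.pow (Nat.sub_pos_of_lt Fintype.one_lt_card)
    (hcard ▸ Nat.mul_self_sub_one_eq_of_two_mul_eq_succ hc)
  have hs : ((p ^ k : ℕ) : F) = 0 := by simp [CharP.cast_eq_zero, hk.ne']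
  rw [show (p ^ k + 1) / 2 = c by omega, FiniteField.forall_exists_sq_eq_iff hF2 hcard hc]
  constructor
  · intro h
    obtain ⟨⟨r, hr⟩, hδc⟩ := odd_and_pow_eq_neg_one_of_forall_pow_eq_one hc hs hζc hδ h
    exact ⟨by omega, hδc⟩
  · rintro ⟨h4, hδc⟩
    exact forall_pow_eq_one_of_pow_eq_neg_one hF2 hc (Nat.odd_iff.mpr (by omega)) hδc
end

section
/- Let p be an odd prime, q a power of p, and let α ∈ F_q be such that α² − 1 is a nonzero square in F_q. Let ℓ : F_{q²} → F_{q²} be an F_p-linear bijection such that ℓ(u) = α·u for every u ∈ F_q. Then x^{q+1} + ℓ(x²) is a planar function on F_{q²}. -/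
/-!
Let `σ x = x ^ q`, an involutive automorphism of `F_{q²}` with fixed field `F_q`. Up to a constant,
`f (x + c) - f x` is the additive map `L x = c σ(x) + σ(c) x + ℓ(2 c x)`, so planarity means `ker L = 0`.
For `x ∈ ker L`, `c σ(x) + σ(c) x` is a trace, hence lies in `F_q`; as `ℓ` is injective and acts on
`F_q` as multiplication by `α`, also `2 c x ∈ F_q` and `2 α c x = -(c σ(x) + σ(c) x)`. Eliminating
`σ(x)` leaves `x (c² + 2 α c σ(c) + σ(c)²) = 0`. The bracket cannot vanish: otherwise
`d = c² - σ(c)²` and `e = 2 c σ(c) b`, where `b² = α² - 1`, satisfy `d² = e²`, while `σ d = -d`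
and `σ e = e` force `e = 0`.
-/

section Involution

variable {F : Type*} [Field F] (σ : F →+* F)

theorem eq_zero_of_sq_eq_sq_of_map_eq_neg (h2 : (2 : F) ≠ 0) {d e : F} (hde : d ^ 2 = e ^ 2)
    (hd : σ d = -d) (he : σ e = e) : e = 0 := by
  have he_neg : e = -e := by
    rcases sq_eq_sq_iff_eq_or_eq_neg.mp hde with h | h
    · have := congrArg σ h
      rw [hd, he] at this
      linear_combination -h - this
    · have := congrArg σ h
      rw [hd, map_neg, he] at this
      linear_combination h + this
  exact (mul_eq_zero.mp (by linear_combination he_neg : (2 : F) * e = 0)).resolve_left h2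

theorem sq_add_mul_add_sq_ne_zero (hσ : ∀ x, σ (σ x) = x) (h2 : (2 : F) ≠ 0) {α b c : F}
    (hb : σ b = b) (hb0 : b ≠ 0) (hbα : b ^ 2 = α ^ 2 - 1) (hc : c ≠ 0) :
    c ^ 2 + 2 * α * (c * σ c) + σ c ^ 2 ≠ 0 := by
  intro h
  have hσc : σ c ≠ 0 := (map_ne_zero σ).mpr hc
  have hde : (c ^ 2 - σ c ^ 2) ^ 2 = (2 * (c * σ c) * b) ^ 2 := by
    linear_combination (c ^ 2 + σ c ^ 2 - 2 * α * (c * σ c)) * h - 4 * (c * σ c) ^ 2 * hbα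
  have hd : σ (c ^ 2 - σ c ^ 2) = -(c ^ 2 - σ c ^ 2) := by
    rw [map_sub, map_pow, map_pow, hσ]
    ring
  have he : σ (2 * (c * σ c) * b) = 2 * (c * σ c) * b := by
    rw [map_mul, map_mul, map_mul, hσ, hb, map_ofNat]
    ring
  exact mul_ne_zero (mul_ne_zero h2 (mul_ne_zero hc hσc)) hb0
    (eq_zero_of_sq_eq_sq_of_map_eq_neg σ h2 hde hd he)

def planarDiff (ℓ : F →+ F) (c : F) : F →+ F :=
  (AddMonoidHom.mulLeft c).comp σ.toAddMonoidHom + AddMonoidHom.mulLeft (σ c) +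
    ℓ.comp (AddMonoidHom.mulLeft (2 * c))

theorem planarDiff_apply (ℓ : F →+ F) (c x : F) :
    planarDiff σ ℓ c x = c * σ x + σ c * x + ℓ (2 * c * x) :=
  rfl

theorem sub_eq_planarDiff_add (ℓ : F →+ F) (c x : F) :
    (σ (x + c) * (x + c) + ℓ ((x + c) ^ 2)) - (σ x * x + ℓ (x ^ 2)) =
      planarDiff σ ℓ c x + (σ c * c + ℓ (c ^ 2)) := by
  rw [planarDiff_apply, map_add, show (x + c) ^ 2 = x ^ 2 + 2 * c * x + c ^ 2 by ring,
    map_add, map_add]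
  ring

theorem planarDiff_injective (hσ : ∀ x, σ (σ x) = x) (h2 : (2 : F) ≠ 0) {ℓ : F →+ F}
    (hℓ : Function.Injective ℓ) {α c : F} (hα : σ α = α) (hfix : ∀ u, σ u = u → ℓ u = α * u)
    (hquad : c ^ 2 + 2 * α * (c * σ c) + σ c ^ 2 ≠ 0) :
    Function.Injective (planarDiff σ ℓ c) := by
  have hα0 : α ≠ 0 := by
    rintro rfl
    exact one_ne_zero (hℓ (by rw [hfix 1 (map_one σ), map_zero, zero_mul]))
  refine (injective_iff_map_eq_zero _).mpr fun x hx => ?_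
  rw [planarDiff_apply] at hx
  set s := -(c * σ x + σ c * x) with hs
  have hs_fix : σ s = s := by
    rw [hs, map_neg, map_add, map_mul, map_mul, hσ, hσ]
    ring
  have hℓs : ℓ (s / α) = s := by
    rw [hfix _ (by rw [map_div₀, hs_fix, hα]), mul_div_cancel₀ _ hα0]
  have h2cx : 2 * c * x = s / α := hℓ (by rw [hℓs]; linear_combination hx)
  have hfix_cx : σ c * σ x = c * x := by
    have := congrArg σ h2cx
    rw [map_div₀, hs_fix, hα, ← h2cx, map_mul, map_mul, map_ofNat, mul_assoc, mul_assoc] at this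
    exact mul_left_cancel₀ h2 this
  have hαcx : α * (2 * c * x) = s := by rw [h2cx, mul_div_cancel₀ _ hα0]
  have : x * (c ^ 2 + 2 * α * (c * σ c) + σ c ^ 2) = 0 := by
    linear_combination σ c * hαcx - c * hfix_cx
  exact (mul_eq_zero.mp this).resolve_right hquad

end Involution

theorem planar_of_scalar_on_subfield_general
    (p m : ℕ) (hp : p.Prime) (hodd : Odd p)
    (q : ℕ) (hq : q = p ^ m)
    (F : Type*) [Field F] [Fintype F] (hF : Fintype.card F = q ^ 2)
    (α : F) (hα : α ^ q = α)
    (hsq : ∃ b : F, b ≠ 0 ∧ b ^ q = b ∧ b ^ 2 = α ^ 2 - 1)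
    (ℓ : F → F) (hℓ : ∀ x y, ℓ (x + y) = ℓ x + ℓ y) (hbij : Function.Bijective ℓ)
    (hfix : ∀ u : F, u ^ q = u → ℓ u = α * u)
    (f : F → F) (hf : ∀ x, f x = x ^ (q + 1) + ℓ (x ^ 2)) :
    ∀ c : F, c ≠ 0 → Function.Bijective (fun x => f (x + c) - f x) := by
  intro c hc
  have : Fact p.Prime := ⟨hp⟩
  have : CharP F p := charP_of_card_eq_prime_pow (by rw [hF, hq, ← pow_mul])
  set σ := iterateFrobenius F p m
  have hσ : ∀ x, σ x = x ^ q := fun x => by rw [hq]; rfl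
  have hσσ : ∀ x, σ (σ x) = x := fun x => by
    rw [hσ, hσ, ← pow_mul, ← sq, ← hF, FiniteField.pow_card]
  have h2 : (2 : F) ≠ 0 :=
    Ring.two_ne_zero (by rw [ringChar.eq F p]; rintro rfl; exact absurd hodd (by decide))
  obtain ⟨b, hb0, hb, hbα⟩ := hsq
  have hdiff : (fun x => f (x + c) - f x) =
      fun x => planarDiff σ (AddMonoidHom.mk' ℓ hℓ) c x + (σ c * c + ℓ (c ^ 2)) := by
    funext x
    simp only [hf, pow_succ _ q, ← hσ]
    exact sub_eq_planarDiff_add σ (AddMonoidHom.mk' ℓ hℓ) c x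
  rw [hdiff]
  refine Finite.injective_iff_bijective.mp ((add_left_injective _).comp ?_)
  exact planarDiff_injective σ hσσ h2 hbij.1 (by rw [hσ, hα]) (fun u hu => hfix u (hσ u ▸ hu))
    (sq_add_mul_add_sq_ne_zero σ hσσ h2 (by rw [hσ, hb]) hb0 hbα hc)

/-- if `α ∈ F_q` with `α² − 1` a nonzero square in `F_q`, and `ℓ` is an
`F_p`-linear bijection of `F_{q²}` with `ℓ(u) = α·u` for all `u ∈ F_q`, then
`x^{q+1} + ℓ(x²)` is planar on `F_{q²}`. -/
theorem planar_of_scalar_on_subfield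
    (p m : ℕ) (hp : p.Prime) (hodd : Odd p) (hm : 0 < m)
    (q : ℕ) (hq : q = p ^ m)
    (F : Type*) [Field F] [Fintype F] (hF : Fintype.card F = q ^ 2)
    (α : F) (hα : α ^ q = α)
    (hsq : ∃ b : F, b ≠ 0 ∧ b ^ q = b ∧ b ^ 2 = α ^ 2 - 1)
    (ℓ : F → F) (hℓ : ∀ x y, ℓ (x + y) = ℓ x + ℓ y) (hbij : Function.Bijective ℓ)
    (hfix : ∀ u : F, u ^ q = u → ℓ u = α * u)
    (f : F → F) (hf : ∀ x, f x = x ^ (q + 1) + ℓ (x ^ 2)) :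
    ∀ c : F, c ≠ 0 → Function.Bijective (fun x => f (x + c) - f x) :=
  planar_of_scalar_on_subfield_general p m hp hodd q hq F hF α hα hsq ℓ hℓ hbij hfix f hf
end

section
/- Let p be an odd prime, q a power of p, and b ∈ F_{q²}*. Then the function x^{q+1} + b·x² is a planar function on F_{q²} if and only if 1 − N(b)^{−1} is a nonzero square in F_q. -/
/-!
The difference map `x ↦ f (x + c) - f x` is the additive map
`L_c x = c x^q + (c^q + 2 b c) x` plus a constant, so `f` is planar iff no `L_c` with `c ≠ 0`
has a nonzero root. Such a root exists iff `u = c^(q-1)` and `v = x^(q-1)` satisfy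
`u + v + 2 b = 0`; by cyclicity of `Fˣ` these range over all elements of norm one. Writing
`u = b (s - 1)`, `v = -b (s + 1)`, two norm-one elements with this sum exist iff some `s` with
`s^q = -s` has `s² = 1 - N(b)⁻¹`. Finally `1 - N(b)⁻¹ ∈ F_q` is a square in `F_{q²}`, and its
square roots lie either all in `F_q` or all on the line `s^q = -s`, and not both unless it is 0.
-/

open Function

theorem IsCyclic.exists_pow_eq_of_pow_eq_one {G : Type*} [CommGroup G] [IsCyclic G] [Finite G]
    {a b : ℕ} (hab : Nat.card G = a * b) {y : G} (hy : y ^ b = 1) : ∃ x, x ^ a = y := by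
  have ha : a ≠ 0 := by
    rintro rfl
    exact Nat.card_pos.ne' (by rw [hab, zero_mul])
  have hrange : (powMonoidHom a : G →* G).range = (powMonoidHom b).ker := by
    refine Subgroup.eq_of_le_of_card_ge ?_ ?_
    · rintro _ ⟨x, rfl⟩
      rw [MonoidHom.mem_ker, powMonoidHom_apply, powMonoidHom_apply, ← pow_mul, ← hab,
        pow_card_eq_one']
    · rw [IsCyclic.card_powMonoidHom_range, IsCyclic.card_powMonoidHom_ker, hab,
        Nat.gcd_mul_right_left, Nat.gcd_mul_left_left,
        Nat.mul_div_cancel_left _ (Nat.pos_of_ne_zero ha)]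
  exact hrange.ge hy

section QuadraticExtension

variable {F : Type*} [Field F] [Fintype F] {q : ℕ}

theorem add_pow_of_card_eq_sq (hF : Fintype.card F = q ^ 2) (x y : F) :
    (x + y) ^ q = x ^ q + y ^ q := by
  obtain ⟨n, hp, hn⟩ := FiniteField.card F (ringChar F)
  have : Fact (ringChar F).Prime := ⟨hp⟩
  obtain ⟨i, -, rfl⟩ := (Nat.dvd_prime_pow hp).mp (hn ▸ hF ▸ dvd_pow_self q two_ne_zero)
  exact add_pow_char_pow x y _ _

theorem sub_pow_of_card_eq_sq (hF : Fintype.card F = q ^ 2) (x y : F) :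
    (x - y) ^ q = x ^ q - y ^ q :=
  eq_sub_of_add_eq (by rw [← add_pow_of_card_eq_sq hF, sub_add_cancel])

theorem pow_pow_of_card_eq_sq (hF : Fintype.card F = q ^ 2) (x : F) : (x ^ q) ^ q = x := by
  rw [← pow_mul, ← sq, ← hF, FiniteField.pow_card]

theorem pow_succ_pow_of_card_eq_sq (hF : Fintype.card F = q ^ 2) (x : F) :
    (x ^ (q + 1)) ^ q = x ^ (q + 1) := by
  rw [pow_right_comm, pow_succ, pow_pow_of_card_eq_sq hF, pow_succ, mul_comm]

theorem two_ne_zero_of_card_eq_sq (hF : Fintype.card F = q ^ 2) (hq : Odd q) : (2 : F) ≠ 0 :=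
  Ring.two_ne_zero fun h ↦ by
    have := FiniteField.even_card_iff_char_two.mp h
    rw [hF, ← Nat.even_iff] at this
    exact Nat.not_even_iff_odd.mpr hq.pow this

theorem exists_pow_eq_mul_of_pow_succ_eq_one (hF : Fintype.card F = q ^ 2) {τ : F}
    (hτ : τ ^ (q + 1) = 1) : ∃ x : F, x ≠ 0 ∧ x ^ q = τ * x := by
  obtain ⟨k, rfl⟩ : ∃ k, q = k + 1 := Nat.exists_eq_succ_of_ne_zero (by
    rintro rfl; exact Fintype.card_ne_zero (hF.trans (zero_pow two_ne_zero)))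
  have hcard : Nat.card Fˣ = k * (k + 1 + 1) := by
    rw [Nat.card_units, Nat.card_eq_fintype_card, hF]; ring_nf; omega
  have hτ0 : τ ≠ 0 := by rintro rfl; simp at hτ
  obtain ⟨x, hx⟩ := IsCyclic.exists_pow_eq_of_pow_eq_one hcard (y := Units.mk0 τ hτ0)
    (Units.ext (by simpa using hτ))
  exact ⟨x, x.ne_zero, by rw [pow_succ, ← Units.val_pow_eq_pow_val, hx, Units.val_mk0]⟩

theorem isSquare_of_pow_eq_self (hF : Fintype.card F = q ^ 2) (hq : Odd q) {z : F}
    (hz : z ^ q = z) : IsSquare z := by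
  rcases eq_or_ne z 0 with rfl | hz0
  · exact ⟨0, by rw [mul_zero]⟩
  obtain ⟨k, rfl⟩ := hq
  have hcard : Nat.card Fˣ = 2 * (2 * k * (k + 1)) := by
    rw [Nat.card_units, Nat.card_eq_fintype_card, hF]; ring_nf; omega
  have hz1 : z ^ (2 * k) = 1 := by
    rw [pow_succ] at hz
    exact (mul_eq_right₀ hz0).mp hz
  obtain ⟨x, hx⟩ := IsCyclic.exists_pow_eq_of_pow_eq_one hcard (y := Units.mk0 z hz0)
    (Units.ext (by
      rw [Units.val_pow_eq_pow_val, Units.val_mk0, pow_mul, hz1, one_pow, Units.val_one]))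
  exact ⟨x, by rw [← sq, ← Units.val_pow_eq_pow_val, hx, Units.val_mk0]⟩

theorem bijective_sub_iff_forall_eq_zero (hF : Fintype.card F = q ^ 2) (b c : F) :
    Bijective (fun x ↦ (x + c) ^ (q + 1) + b * (x + c) ^ 2 - (x ^ (q + 1) + b * x ^ 2)) ↔
      ∀ x, c * x ^ q + (c ^ q + 2 * b * c) * x = 0 → x = 0 := by
  let L : F →+ F := AddMonoidHom.mk' (fun x ↦ c * x ^ q + (c ^ q + 2 * b * c) * x) fun _ _ ↦ by
    simp only [add_pow_of_card_eq_sq hF]; ring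
  have hL : (fun x ↦ (x + c) ^ (q + 1) + b * (x + c) ^ 2 - (x ^ (q + 1) + b * x ^ 2)) =
      (· + (c ^ (q + 1) + b * c ^ 2)) ∘ L := by
    funext x
    simp only [L, comp_apply, AddMonoidHom.mk'_apply, pow_succ, add_pow_of_card_eq_sq hF]
    ring
  rw [hL, ← Finite.injective_iff_bijective, (add_left_injective _).of_comp_iff,
    injective_iff_map_eq_zero]
  rfl

theorem exists_root_iff_exists_norm_one_add_eq_zero (hF : Fintype.card F = q ^ 2) (b : F) :
    (∃ c ≠ (0 : F), ∃ x ≠ (0 : F), c * x ^ q + (c ^ q + 2 * b * c) * x = 0) ↔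
      ∃ u v : F, u ^ (q + 1) = 1 ∧ v ^ (q + 1) = 1 ∧ u + v + 2 * b = 0 := by
  constructor
  · rintro ⟨c, hc, x, hx, h⟩
    have hnorm : ∀ y : F, y ≠ 0 → (y ^ q / y) ^ (q + 1) = 1 := fun y hy ↦ by
      rw [div_pow, pow_succ (y ^ q), pow_pow_of_card_eq_sq hF, pow_succ, mul_comm y,
        div_self (mul_ne_zero (pow_ne_zero q hy) hy)]
    refine ⟨c ^ q / c, x ^ q / x, hnorm c hc, hnorm x hx, ?_⟩
    field_simp
    linear_combination h
  · rintro ⟨u, v, hu, hv, h⟩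
    obtain ⟨c, hc, hcu⟩ := exists_pow_eq_mul_of_pow_succ_eq_one hF hu
    obtain ⟨x, hx, hxv⟩ := exists_pow_eq_mul_of_pow_succ_eq_one hF hv
    exact ⟨c, hc, x, hx, by rw [hcu, hxv]; linear_combination c * x * h⟩

theorem exists_norm_one_add_eq_zero_iff (hF : Fintype.card F = q ^ 2) (hq : Odd q) {b : F}
    (hb : b ≠ 0) :
    (∃ u v : F, u ^ (q + 1) = 1 ∧ v ^ (q + 1) = 1 ∧ u + v + 2 * b = 0) ↔
      ∃ s : F, s ^ q = -s ∧ s ^ 2 = 1 - (b ^ (q + 1))⁻¹ := by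
  have hβ : b ^ (q + 1) ≠ 0 := pow_ne_zero _ hb
  have hminus : ∀ s : F, (b * (s - 1)) ^ (q + 1) = b ^ (q + 1) * ((s ^ q - 1) * (s - 1)) :=
    fun s ↦ by rw [mul_pow, pow_succ (s - 1), sub_pow_of_card_eq_sq hF, one_pow]
  have hplus : ∀ s : F, (-(b * (s + 1))) ^ (q + 1) = b ^ (q + 1) * ((s ^ q + 1) * (s + 1)) :=
    fun s ↦ by
      rw [hq.add_one.neg_pow, mul_pow, pow_succ (s + 1), add_pow_of_card_eq_sq hF, one_pow]
  have hnorm : ∀ s : F, b ^ (q + 1) * (1 - s ^ 2) = 1 ↔ s ^ 2 = 1 - (b ^ (q + 1))⁻¹ := fun s ↦ by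
    rw [← eq_inv_mul_iff_mul_eq₀ hβ, mul_one, sub_eq_iff_eq_add', eq_sub_iff_add_eq, eq_comm]
  constructor
  · rintro ⟨u, v, hu, hv, h⟩
    obtain ⟨s, rfl⟩ : ∃ s, u = b * (s - 1) := ⟨(u + b) / b, by field_simp; ring⟩
    obtain rfl : v = -(b * (s + 1)) := by linear_combination h
    rw [hminus] at hu
    rw [hplus] at hv
    have hs : s ^ q = -s := by
      have h2 := two_ne_zero_of_card_eq_sq hF hq
      have : 2 * b ^ (q + 1) * (s ^ q + s) = 0 := by linear_combination hv - hu
      simpa [h2, hβ, add_eq_zero_iff_eq_neg] using this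
    refine ⟨s, hs, (hnorm s).mp ?_⟩
    rw [hs] at hu
    linear_combination hu
  · rintro ⟨s, hs, hs2⟩
    have := (hnorm s).mpr hs2
    refine ⟨b * (s - 1), -(b * (s + 1)), ?_, ?_, by ring⟩
    · rw [hminus, hs]
      linear_combination this
    · rw [hplus, hs]
      linear_combination this

theorem not_exists_pow_eq_neg_iff (hF : Fintype.card F = q ^ 2) (hq : Odd q) {z : F}
    (hz : z ^ q = z) :
    (¬∃ s : F, s ^ q = -s ∧ s ^ 2 = z) ↔ ∃ e : F, e ≠ 0 ∧ e ^ q = e ∧ e ^ 2 = z := by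
  have h2 := two_ne_zero_of_card_eq_sq hF hq
  constructor
  · intro h
    obtain ⟨w, hw⟩ := isSquare_of_pow_eq_self hF hq hz
    rw [← sq] at hw
    have hwq : (w ^ q) ^ 2 = w ^ 2 := by rw [pow_right_comm, ← hw, hz]
    rcases sq_eq_sq_iff_eq_or_eq_neg.mp hwq with hwq | hwq
    · refine ⟨w, fun hw0 ↦ h ⟨w, ?_, hw.symm⟩, hwq, hw.symm⟩
      rw [hwq, hw0, neg_zero]
    · exact absurd ⟨w, hwq, hw.symm⟩ h
  · rintro ⟨e, he, heq, he2⟩ ⟨s, hsq, hs2⟩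
    have h2e : 2 * e = 0 := by
      rcases sq_eq_sq_iff_eq_or_eq_neg.mp (hs2.trans he2.symm) with rfl | rfl
      · linear_combination hsq - heq
      · rw [hq.neg_pow, heq] at hsq
        linear_combination -hsq
    exact he ((mul_eq_zero.mp h2e).resolve_left h2)

end QuadraticExtension

theorem planar_monomial_linear_term_general
    (p m : ℕ) (hodd : Odd p)
    (q : ℕ) (hq : q = p ^ m)
    (F : Type*) [Field F] [Fintype F] (hF : Fintype.card F = q ^ 2)
    (b : F) (hb : b ≠ 0)
    (f : F → F) (hf : ∀ x, f x = x ^ (q + 1) + b * x ^ 2) :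
    (∀ c : F, c ≠ 0 → Function.Bijective (fun x => f (x + c) - f x)) ↔
      (∃ e : F, e ≠ 0 ∧ e ^ q = e ∧ e ^ 2 = 1 - (b ^ (q + 1))⁻¹) := by
  have hqodd : Odd q := hq ▸ hodd.pow
  have hz : (1 - (b ^ (q + 1))⁻¹) ^ q = 1 - (b ^ (q + 1))⁻¹ := by
    rw [sub_pow_of_card_eq_sq hF, one_pow, inv_pow, pow_succ_pow_of_card_eq_sq hF]
  simp only [hf, bijective_sub_iff_forall_eq_zero hF]
  rw [← not_exists_pow_eq_neg_iff hF hqodd hz, ← exists_norm_one_add_eq_zero_iff hF hqodd hb,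
    ← exists_root_iff_exists_norm_one_add_eq_zero hF]
  simp only [not_exists, not_and, ne_eq, not_imp_not]

/-- for `b ∈ F_{q²}*`, the function `x^{q+1} + b·x²` is planar on
`F_{q²}` iff `1 − N(b)⁻¹` is a nonzero square in `F_q`. -/
theorem planar_monomial_linear_term
    (p m : ℕ) (hp : p.Prime) (hodd : Odd p) (hm : 0 < m)
    (q : ℕ) (hq : q = p ^ m)
    (F : Type*) [Field F] [Fintype F] (hF : Fintype.card F = q ^ 2)
    (b : F) (hb : b ≠ 0)
    (f : F → F) (hf : ∀ x, f x = x ^ (q + 1) + b * x ^ 2) :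
    (∀ c : F, c ≠ 0 → Function.Bijective (fun x => f (x + c) - f x)) ↔
      (∃ e : F, e ≠ 0 ∧ e ^ q = e ∧ e ^ 2 = 1 - (b ^ (q + 1))⁻¹) :=
  planar_monomial_linear_term_general p m hodd q hq F hF b hb f hf
end

section
/- Let p be an odd prime, q = p^m, and let e be an integer with 0 < e < 2m such that d = 2m/gcd(e, 2m) is odd. Let ℓ : F_{q²} → F_{q²} be any F_p-linear map and set f(x) = x^{q+1} + ℓ(x²). Then there do not exist F_p-linear bijections ℓ₀, ℓ₁ : F_{q²} → F_{q²} such that ℓ₀(f(x)) = ℓ₁(x)^{p^e+1} for all x ∈ F_{q²}. -/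
/-!
Write `ℓ₀`, `ℓ₀ ∘ ℓ` and `ℓ₁` as linearized polynomials `∑ cᵢ x^{pⁱ}` with indices in `ℤ/2m`.
Since `x^{q²} = x`, both sides of `ℓ₀(f(x)) = ℓ₁(x)^{p^e+1}` become combinations of the monomials
`x^{pˢ+pᵗ}`, all of degree below `q²`; as `p` is odd, distinct pairs `{s, t}` give distinct
exponents (base-`p` digits), so the coefficients on both sides agree. The left side only involves
pairs with `s - t ∈ {0, ±m}`; for every other pair the coefficient
`c_{s-e}^{p^e} c_t + c_{t-e}^{p^e} c_s` of the right side vanishes. As `e` has odd order in `ℤ/2m`,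
this applies to the pairs at distance `e` and `2e`. Around an index `i` with `cᵢ ≠ 0`, three of
these relations combine to `2 c_{i-e}^{p^e+1} c_{i+e} = 0`, while one of them alone forces
`c_{i±e} ≠ 0`.
-/

namespace PlanarMonomial

theorem padicValNat_pow_add_pow {p : ℕ} [hp : Fact p.Prime] (hp2 : p ≠ 2) (a b : ℕ) :
    padicValNat p (p ^ a + p ^ b) = min a b := by
  have key : ∀ {a b : ℕ}, a ≤ b → padicValNat p (p ^ a + p ^ b) = a := by
    intro a b hab
    have hndvd : ¬ p ∣ 1 + p ^ (b - a) := by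
      rcases (b - a).eq_zero_or_pos with h | h
      · rw [h, pow_zero, one_add_one_eq_two, Nat.dvd_prime Nat.prime_two]
        exact fun h' => h'.elim hp.out.one_lt.ne' hp2
      · rw [Nat.dvd_add_left (dvd_pow_self p h.ne')]
        exact hp.out.not_dvd_one
    rw [show p ^ a + p ^ b = p ^ a * (1 + p ^ (b - a)) by
        rw [mul_add, mul_one, ← pow_add, Nat.add_sub_cancel' hab],
      padicValNat.mul (pow_ne_zero _ hp.out.ne_zero) (by omega), padicValNat.prime_pow,
      padicValNat.eq_zero_of_not_dvd hndvd, add_zero]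
  rcases le_total a b with hab | hba
  · rw [key hab, min_eq_left hab]
  · rw [add_comm, key hba, min_eq_right hba]

theorem pow_add_pow_eq_pow_add_pow_iff {p : ℕ} (hp : p.Prime) (hp2 : p ≠ 2) {a b s t : ℕ} :
    p ^ a + p ^ b = p ^ s + p ^ t ↔ a = s ∧ b = t ∨ a = t ∧ b = s := by
  have := Fact.mk hp
  have pow_min_add_pow_max : ∀ a b : ℕ, p ^ min a b + p ^ max a b = p ^ a + p ^ b := by
    intro a b
    rcases le_total a b with h | h
    · rw [min_eq_left h, max_eq_right h]
    · rw [min_eq_right h, max_eq_left h, add_comm]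
  refine ⟨fun h => ?_, by rintro (⟨rfl, rfl⟩ | ⟨rfl, rfl⟩) <;> ring⟩
  have hmin : min a b = min s t := by
    rw [← padicValNat_pow_add_pow hp2, h, padicValNat_pow_add_pow hp2]
  have hmax : max a b = max s t := by
    refine Nat.pow_right_injective hp.two_le ?_
    have h' := pow_min_add_pow_max a b
    rw [hmin, h, ← pow_min_add_pow_max s t] at h'
    exact Nat.add_left_cancel h'
  omega

variable {F : Type*} [Field F] [Fintype F]

open Polynomial in
theorem sum_ite_eq_of_forall_sum_mul_pow_eq {ι κ : Type*} [Fintype ι] [Fintype κ]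
    {u : ι → F} {v : κ → F} {k : ι → ℕ} {l : κ → ℕ}
    (hk : ∀ i, k i < Fintype.card F) (hl : ∀ j, l j < Fintype.card F)
    (h : ∀ x : F, ∑ i, u i * x ^ k i = ∑ j, v j * x ^ l j) (N : ℕ) :
    ∑ i, (if N = k i then u i else 0) = ∑ j, (if N = l j then v j else 0) := by
  have hP := natDegree_sum_le_of_forall_le Finset.univ (fun i => C (u i) * X ^ k i)
    fun i _ => (natDegree_C_mul_X_pow_le _ _).trans (Nat.le_sub_one_of_lt (hk i))
  have hQ := natDegree_sum_le_of_forall_le Finset.univ (fun j => C (v j) * X ^ l j)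
    fun j _ => (natDegree_C_mul_X_pow_le _ _).trans (Nat.le_sub_one_of_lt (hl j))
  have hPQ : ∑ i, C (u i) * X ^ k i = ∑ j, C (v j) * X ^ l j :=
    eq_of_natDegree_lt_card_of_eval_eq (f := id) _ _ Function.injective_id
      (by simpa [eval_finsetSum] using h) (by have := Fintype.card_pos (α := F); omega)
  simpa only [finsetSum_coeff, coeff_C_mul_X_pow] using congrArg (coeff · N) hPQ

variable {p n : ℕ}

theorem pow_pow_pow_mod (hF : Fintype.card F = p ^ n) (x : F) (k : ℕ) :
    x ^ p ^ (k % n) = x ^ p ^ k := by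
  conv_rhs => rw [← Nat.div_add_mod k n, pow_add, pow_mul, pow_mul, ← hF,
    FiniteField.pow_card_pow]

theorem pow_pow_pow_val [NeZero n] (hF : Fintype.card F = p ^ n) (x : F) (i : ZMod n)
    (k : ℕ) : (x ^ p ^ k) ^ p ^ i.val = x ^ p ^ (i + k).val := by
  rw [← pow_mul, ← pow_add, ZMod.val_add, ZMod.val_natCast, Nat.add_mod_mod,
    pow_pow_pow_mod hF, add_comm]

theorem exists_eq_sum_mul_pow_prime_pow [NeZero n] (hp : p.Prime) [CharP F p]
    (hF : Fintype.card F = p ^ n) (g : F →+ F) :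
    ∃ c : ZMod n → F, ∀ x, g x = ∑ i, c i * x ^ p ^ i.val := by
  have := Fact.mk hp
  let Ψ : (ZMod n → F) → (F →+ F) := fun c =>
    { toFun := fun x => ∑ i, c i * x ^ p ^ i.val
      map_zero' := by simp [hp.ne_zero]
      map_add' := fun x y => by
        simp only [add_pow_char_pow, mul_add, Finset.sum_add_distrib] }
  have hlt : ∀ i : ZMod n, p ^ i.val < Fintype.card F := fun i =>
    hF ▸ Nat.pow_lt_pow_right hp.one_lt i.val_lt
  have hinj : Function.Injective Ψ := fun c c' h => funext fun s => by
    simpa [(Nat.pow_right_injective hp.two_le).eq_iff, (ZMod.val_injective n).eq_iff] using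
      sum_ite_eq_of_forall_sum_mul_pow_eq hlt hlt (DFunLike.congr_fun h) (p ^ s.val)
  let := ZMod.algebra F p
  have hrank : Module.finrank (ZMod p) F = n := by
    have := Module.natCard_eq_pow_finrank (K := ZMod p) (V := F)
    rw [Nat.card_zmod, Nat.card_eq_fintype_card, hF] at this
    exact (Nat.pow_right_injective hp.two_le this).symm
  have hcard : Nat.card (F →+ F) = Nat.card (ZMod n → F) := by
    rw [Nat.card_congr (AddMonoidHom.toZModLinearMapEquiv p).toEquiv,
      Module.natCard_eq_pow_finrank (K := ZMod p), Module.finrank_linearMap, hrank, Nat.card_fun,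
      Nat.card_zmod, Nat.card_eq_fintype_card, Nat.card_zmod, hF, pow_mul]
  have : Finite (F →+ F) := Nat.finite_of_card_ne_zero (by rw [hcard]; exact Nat.card_pos.ne')
  obtain ⟨c, hc⟩ := (hinj.bijective_of_nat_card_le hcard.le).2 g
  exact ⟨c, fun x => (DFunLike.congr_fun hc x).symm⟩

theorem pow_val_add_pow_val_eq_iff [NeZero n] (hp : p.Prime) (hp2 : p ≠ 2) {a b s t : ZMod n} :
    p ^ a.val + p ^ b.val = p ^ s.val + p ^ t.val ↔ a = s ∧ b = t ∨ a = t ∧ b = s := by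
  simp only [pow_add_pow_eq_pow_add_pow_iff hp hp2, (ZMod.val_injective n).eq_iff]

theorem pow_val_add_pow_val_lt [NeZero n] (hp : p.Prime) (hp2 : p ≠ 2) (a b : ZMod n) :
    p ^ a.val + p ^ b.val < p ^ n := by
  have hp3 : 3 ≤ p := by have := hp.two_le; omega
  have ha : p ^ a.val ≤ p ^ (n - 1) :=
    Nat.pow_le_pow_right hp.pos (Nat.le_sub_one_of_lt a.val_lt)
  have hb : p ^ b.val ≤ p ^ (n - 1) :=
    Nat.pow_le_pow_right hp.pos (Nat.le_sub_one_of_lt b.val_lt)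
  have hn : p ^ n = p ^ (n - 1) * p := by
    rw [← pow_succ, Nat.sub_add_cancel (Nat.one_le_iff_ne_zero.2 (NeZero.ne n))]
  nlinarith [Nat.one_le_pow (n - 1) p hp.pos]

theorem sum_mul_pow_prime_pow_pow_add_one [NeZero n] [Fact p.Prime] [CharP F p]
    (hF : Fintype.card F = p ^ n) (c : ZMod n → F) (e : ℕ) (x : F) :
    (∑ i, c i * x ^ p ^ i.val) ^ (p ^ e + 1)
      = ∑ i, ∑ j, c i ^ p ^ e * c j * x ^ (p ^ (i + e).val + p ^ j.val) := by
  rw [pow_succ, sum_pow_char_pow, Finset.sum_mul_sum]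
  refine Finset.sum_congr rfl fun i _ => Finset.sum_congr rfl fun j _ => ?_
  rw [mul_pow, pow_right_comm, pow_pow_pow_val hF, pow_add]
  ring

/-- `2 • (s - t) ≠ 0` means `s - t ∉ {0, m}` (and `-m = m`): the monomial `x^{pˢ+pᵗ}` does not
occur on the left-hand side. -/
theorem pow_mul_add_pow_mul_eq_zero_of_forall_eq {m : ℕ} [NeZero m] (hp : p.Prime) (hp2 : p ≠ 2)
    [CharP F p] (hF : Fintype.card F = p ^ (2 * m)) {a b c : ZMod (2 * m) → F} {e : ℕ}
    (h : ∀ x : F, ∑ j, b j * (x ^ (p ^ m + 1)) ^ p ^ j.val + ∑ i, a i * (x ^ 2) ^ p ^ i.val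
      = (∑ i, c i * x ^ p ^ i.val) ^ (p ^ e + 1))
    {s t : ZMod (2 * m)} (hst : 2 • (s - t) ≠ 0) :
    c (s - e) ^ p ^ e * c t + c (t - e) ^ p ^ e * c s = 0 := by
  have := Fact.mk hp
  have hmonomial : ∀ x : F,
      ∑ ij : ZMod (2 * m) ⊕ ZMod (2 * m), Sum.elim b a ij
          * x ^ Sum.elim (fun j : ZMod (2 * m) => p ^ (j + m).val + p ^ j.val)
            (fun i : ZMod (2 * m) => p ^ i.val + p ^ i.val) ij
        = ∑ ij : ZMod (2 * m) × ZMod (2 * m), c ij.1 ^ p ^ e * c ij.2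
          * x ^ (p ^ (ij.1 + e).val + p ^ ij.2.val) := fun x => by
    rw [Fintype.sum_sum_type, Fintype.sum_prod_type, ← sum_mul_pow_prime_pow_pow_add_one hF,
      ← h]
    congr 1 <;> refine Finset.sum_congr rfl fun i _ => ?_
    · rw [pow_succ, mul_pow, pow_pow_pow_val hF, ← pow_add]
      rfl
    · rw [← pow_mul, two_mul (p ^ i.val)]
      rfl
  have hlt : ∀ a b : ZMod (2 * m), p ^ a.val + p ^ b.val < Fintype.card F :=
    fun a b => hF ▸ pow_val_add_pow_val_lt hp hp2 a b
  have hcoeff := sum_ite_eq_of_forall_sum_mul_pow_eq (fun ij => by cases ij <;> exact hlt _ _)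
    (fun ij => hlt _ _) hmonomial (p ^ s.val + p ^ t.val)
  have hm : 2 • (m : ZMod (2 * m)) = 0 := by
    rw [nsmul_eq_mul]
    exact_mod_cast ZMod.natCast_self (2 * m)
  have hne : s ≠ t := by rintro rfl; simp at hst
  have hsupport : Finset.univ.filter (fun ij : ZMod (2 * m) × ZMod (2 * m) =>
      p ^ s.val + p ^ t.val = p ^ (ij.1 + e).val + p ^ ij.2.val) = {(s - e, t), (t - e, s)} := by
    ext ⟨i, j⟩
    simp only [Finset.mem_filter, Finset.mem_univ, true_and, pow_val_add_pow_val_eq_iff hp hp2,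
      Finset.mem_insert, Finset.mem_singleton, Prod.mk.injEq, eq_sub_iff_add_eq]
    tauto
  rw [Fintype.sum_sum_type, Finset.sum_eq_zero (fun j _ => if_neg ?_),
    Finset.sum_eq_zero (fun i _ => if_neg ?_), zero_add, ← Finset.sum_filter, hsupport,
    Finset.sum_pair] at hcoeff
  · exact hcoeff.symm
  · exact fun h => hne (Prod.mk.inj h).2.symm
  · rw [Sum.elim_inr, pow_val_add_pow_val_eq_iff hp hp2]
    rintro (⟨rfl, rfl⟩ | ⟨rfl, rfl⟩) <;> exact hne rfl
  · rw [Sum.elim_inl, pow_val_add_pow_val_eq_iff hp hp2]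
    rintro (⟨rfl, rfl⟩ | ⟨rfl, rfl⟩) <;> simp [hm] at hst

theorem eq_zero_of_forall_pow_mul_add_pow_mul_eq_zero {G K : Type*} [AddCommGroup G]
    [CommRing K] [IsDomain K] (h2 : (2 : K) ≠ 0) {k : ℕ} (hk : k ≠ 0) {c : G → K} {ε : G}
    (hc : ∀ s t, t = s + ε ∨ t = s + ε + ε → c (s - ε) ^ k * c t + c (t - ε) ^ k * c s = 0) :
    c = 0 := by
  funext i
  by_contra hi
  change c i ≠ 0 at hi
  have e₁ := hc (i - ε) i (.inl (sub_add_cancel i ε).symm)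
  have e₂ := hc (i - ε) (i + ε) (.inr (by abel))
  have e₃ := hc i (i + ε) (.inl rfl)
  rw [add_sub_cancel_right] at e₂ e₃
  have hprod : c (i - ε) ^ k * c (i + ε) ≠ 0 := by
    rw [eq_neg_of_add_eq_zero_left e₃, neg_ne_zero]
    exact mul_ne_zero (pow_ne_zero k hi) hi
  have hminus : c (i - ε) ≠ 0 := fun h => hprod (by rw [h, zero_pow hk, zero_mul])
  apply mul_ne_zero (mul_ne_zero h2 hminus) hprod
  linear_combination c (i + ε) * e₁ - c i * e₂ + c (i - ε) * e₃

theorem two_nsmul_sub_ne_zero {G : Type*} [AddCommGroup G] {ε : G} (hε : Odd (addOrderOf ε))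
    (hε0 : ε ≠ 0) {s t : G} (hst : t = s + ε ∨ t = s + ε + ε) : 2 • (s - t) ≠ 0 := by
  have h2pow (j : ℕ) : 2 ^ j • ε ≠ 0 := fun h => hε0 <| AddMonoid.addOrderOf_eq_one_iff.1 <|
    (Nat.coprime_two_right.2 hε).pow_right j |>.eq_one_of_dvd (addOrderOf_dvd_of_nsmul_eq_zero h)
  rcases hst with rfl | rfl
  · rw [sub_add_cancel_left, smul_neg, neg_ne_zero]
    simpa using h2pow 1
  · rw [show s - (s + ε + ε) = -(2 • ε) by abel, smul_neg, neg_ne_zero, smul_smul]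
    simpa using h2pow 2

end PlanarMonomial

open PlanarMonomial in
theorem not_equivalent_to_monomial_general
    (p m e : ℕ) (hp : p.Prime) (hodd : Odd p)
    (he0 : 0 < e) (he2 : e < 2 * m) (hd : Odd (2 * m / Nat.gcd e (2 * m)))
    (q : ℕ) (hq : q = p ^ m)
    (F : Type*) [Field F] [Fintype F] (hF : Fintype.card F = q ^ 2)
    (ℓ : F → F) (hℓ : ∀ x y, ℓ (x + y) = ℓ x + ℓ y)
    (f : F → F) (hf : ∀ x, f x = x ^ (q + 1) + ℓ (x ^ 2)) :
    ¬∃ ℓ₀ ℓ₁ : F → F,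
      (∀ x y, ℓ₀ (x + y) = ℓ₀ x + ℓ₀ y) ∧ Function.Bijective ℓ₀ ∧
      (∀ x y, ℓ₁ (x + y) = ℓ₁ x + ℓ₁ y) ∧ Function.Bijective ℓ₁ ∧
      (∀ x : F, ℓ₀ (f x) = (ℓ₁ x) ^ (p ^ e + 1)) := by
  rintro ⟨ℓ₀, ℓ₁, hℓ₀, -, hℓ₁, hℓ₁bij, hequiv⟩
  subst hq
  have := Fact.mk hp
  have : NeZero m := ⟨by omega⟩
  have hp2 : p ≠ 2 := hodd.ne_two_of_dvd_nat dvd_rfl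
  have hcard : Fintype.card F = p ^ (2 * m) := by rw [hF, ← pow_mul, mul_comm]
  have := charP_of_card_eq_prime_pow hcard
  let L₀ := AddMonoidHom.mk' ℓ₀ hℓ₀
  obtain ⟨b, hb⟩ := exists_eq_sum_mul_pow_prime_pow hp hcard L₀
  obtain ⟨a, ha⟩ := exists_eq_sum_mul_pow_prime_pow hp hcard (L₀.comp (AddMonoidHom.mk' ℓ hℓ))
  obtain ⟨c, hc⟩ := exists_eq_sum_mul_pow_prime_pow hp hcard (AddMonoidHom.mk' ℓ₁ hℓ₁)
  have hc0 : c ≠ 0 := by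
    obtain ⟨x, hx⟩ := hℓ₁bij.2 1
    rintro rfl
    simpa [hx] using hc x
  have hε : Odd (addOrderOf (e : ZMod (2 * m))) := by
    rwa [ZMod.addOrderOf_coe _ (by omega), Nat.gcd_comm]
  have hε0 : (e : ZMod (2 * m)) ≠ 0 := by
    rw [Ne, ZMod.natCast_eq_zero_iff]
    exact Nat.not_dvd_of_pos_of_lt he0 he2
  have hexpand : ∀ x : F, ∑ j, b j * (x ^ (p ^ m + 1)) ^ p ^ j.val
      + ∑ i, a i * (x ^ 2) ^ p ^ i.val = (∑ i, c i * x ^ p ^ i.val) ^ (p ^ e + 1) := fun x => by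
    rw [← hb, ← ha, ← hc]
    change ℓ₀ _ + ℓ₀ (ℓ _) = ℓ₁ x ^ _
    rw [← hℓ₀, ← hf, hequiv]
  exact hc0 (eq_zero_of_forall_pow_mul_add_pow_mul_eq_zero
    (Ring.two_ne_zero (by rwa [ringChar.eq F p])) (pow_ne_zero e hp.ne_zero)
    fun s t hst => pow_mul_add_pow_mul_eq_zero_of_forall_eq hp hp2 hcard hexpand
      (two_nsmul_sub_ne_zero hε hε0 hst))

/-- for `0 < e < 2m` with `d = 2m/gcd(e,2m)` odd, no function of the
form `x^{q+1} + ℓ(x²)` on `F_{q²}` is linearly equivalent to the monomial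
`x^{p^e+1}`, i.e. there are no `F_p`-linear bijections `ℓ₀, ℓ₁` with
`ℓ₀(f(x)) = ℓ₁(x)^{p^e+1}` for all `x`. -/
theorem not_equivalent_to_monomial
    (p m e : ℕ) (hp : p.Prime) (hodd : Odd p) (hm : 0 < m)
    (he0 : 0 < e) (he2 : e < 2 * m) (hd : Odd (2 * m / Nat.gcd e (2 * m)))
    (q : ℕ) (hq : q = p ^ m)
    (F : Type*) [Field F] [Fintype F] (hF : Fintype.card F = q ^ 2)
    (ℓ : F → F) (hℓ : ∀ x y, ℓ (x + y) = ℓ x + ℓ y)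
    (f : F → F) (hf : ∀ x, f x = x ^ (q + 1) + ℓ (x ^ 2)) :
    ¬∃ ℓ₀ ℓ₁ : F → F,
      (∀ x y, ℓ₀ (x + y) = ℓ₀ x + ℓ₀ y) ∧ Function.Bijective ℓ₀ ∧
      (∀ x y, ℓ₁ (x + y) = ℓ₁ x + ℓ₁ y) ∧ Function.Bijective ℓ₁ ∧
      (∀ x : F, ℓ₀ (f x) = (ℓ₁ x) ^ (p ^ e + 1)) :=
  not_equivalent_to_monomial_general p m e hp hodd he0 he2 hd q hq F hF ℓ hℓ f hf
end

section
/- Let p be an odd prime, k ≥ 1, m = 2k, q = p^m, and let b, c ∈ F_{q²} with N(b) ≠ N(c). Set ℓ(x) = (b·x^q + c·x)^{p^k} and f(x) = x^{q+1} + ℓ(x²). Then for every integer e ≥ 0 such that 2m/gcd(e, 2m) is odd (where gcd(0, 2m) = 2m), there do not exist F_p-linear bijections ℓ₀, ℓ₁ : F_{q²} → F_{q²} with ℓ₀(f(x)) = ℓ₁(x)^{p^e+1} for all x ∈ F_{q²}. In particular, f is not linearly equivalent to any planar monomial x^{p^e+1}. -/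
/-!
Polarizing `ℓ₀ ∘ f = (·) ^ (p ^ e + 1) ∘ ℓ₁` transports `polar f` to
`(u, v) ↦ u ^ p ^ e * v + u * v ^ p ^ e`, whose first argument can be scaled by any `ζ` of the
subfield `𝔽_{p^g}`, `g = gcd(e, 2m)`, at the cost of scaling the value by `ζ`. Conjugating back
gives additive `P`, `P₀` with `polar f (P x) y = P₀ (polar f x y)`. Writing `P₀` as a linearized
polynomial and comparing coefficients in `y` forces `P x = D * x + E * x ^ q` with `D ∈ 𝔽_q` and
`c * E = b * E ^ q`; taking norms, `N(b) ≠ N(c)` gives `E = 0`. So `D ∈ 𝔽_q` has the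
multiplicative order `p ^ g - 1` of `ζ`, whence `p ^ g - 1 ∣ q - 1`, `g ∣ m` and `2m / g` is even.
-/

open Finset Function

lemma finrank_zmod_eq_of_card {V : Type*} [AddCommGroup V] [Fintype V] {p n : ℕ}
    [Fact p.Prime] [Module (ZMod p) V] (hV : Fintype.card V = p ^ n) :
    Module.finrank (ZMod p) V = n := by
  have := Module.card_eq_pow_finrank (K := ZMod p) (V := V)
  rw [ZMod.card, hV] at this
  exact (Nat.pow_right_injective (Fact.out : p.Prime).two_le this).symm

lemma pow_pow_mod {F : Type*} [Field F] [Fintype F] {p n : ℕ} (hF : Fintype.card F = p ^ n)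
    (m : ℕ) (x : F) : x ^ p ^ m = x ^ p ^ (m % n) := by
  conv_lhs => rw [← Nat.div_add_mod m n, pow_add, pow_mul, pow_mul, ← hF,
    FiniteField.pow_card_pow]

section Frobenius

variable {F : Type*} [Field F] {p n : ℕ} [Fact p.Prime] [CharP F p]

/-- `x ↦ x ^ p ^ i`; on a field of order `p ^ n` this only depends on `i` modulo `n`. -/
abbrev frob (p : ℕ) [Fact p.Prime] [CharP F p] (i : ZMod n) : F →+* F :=
  iterateFrobenius F p i.val

lemma frob_apply (i : ZMod n) (x : F) : frob p i x = x ^ p ^ i.val := iterateFrobenius_def ..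

@[simp]
lemma frob_zero (x : F) : frob p (0 : ZMod n) x = x := by
  simp [frob_apply]

variable [Fintype F]

lemma pow_pow_eq_frob (hF : Fintype.card F = p ^ n) (m : ℕ) (x : F) :
    x ^ p ^ m = frob p (m : ZMod n) x := by
  rw [frob_apply, ZMod.val_natCast, pow_pow_mod hF]

variable [NeZero n]

lemma frob_frob (hF : Fintype.card F = p ^ n) (i j : ZMod n) (x : F) :
    frob p i (frob p j x) = frob p (i + j) x := by
  rw [frob_apply, frob_apply, ← pow_mul, ← pow_add, add_comm, pow_pow_eq_frob hF, Nat.cast_add,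
    ZMod.natCast_zmod_val, ZMod.natCast_zmod_val]

lemma frob_injective (hF : Fintype.card F = p ^ n) :
    Injective (fun i : ZMod n => (frob p i : F → F)) := by
  let := ZMod.algebra F p
  have hpow (m : ℕ) (x : F) :
      (FiniteField.frobeniusAlgEquivOfAlgebraic (ZMod p) F ^ m) x = x ^ p ^ m := by
    rw [AlgEquiv.coe_pow, FiniteField.coe_frobeniusAlgEquivOfAlgebraic_iterate, ZMod.card]
  intro i j hij
  have hfun : FiniteField.frobeniusAlgEquivOfAlgebraic (ZMod p) F ^ i.val =
      FiniteField.frobeniusAlgEquivOfAlgebraic (ZMod p) F ^ j.val := by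
    ext x
    simpa [hpow, frob_apply] using congr_fun hij x
  rw [pow_eq_pow_iff_modEq, FiniteField.orderOf_frobeniusAlgEquivOfAlgebraic,
    finrank_zmod_eq_of_card hF] at hfun
  exact ZMod.val_injective n (Nat.ModEq.eq_of_lt_of_lt hfun (ZMod.val_lt i) (ZMod.val_lt j))

end Frobenius

section Linearized

variable {F : Type*} [Field F] {p n : ℕ} [NeZero n] [Fact p.Prime] [CharP F p]

def linearizedMap (p : ℕ) [Fact p.Prime] [CharP F p] (a : ZMod n → F) : F →+ F where
  toFun x := ∑ i, a i * frob p i x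
  map_zero' := by simp
  map_add' x y := by simp [mul_add, sum_add_distrib]

lemma linearizedMap_apply (a : ZMod n → F) (x : F) :
    linearizedMap p a x = ∑ i, a i * frob p i x := rfl

lemma linearizedMap_add (a a' : ZMod n → F) (x : F) :
    linearizedMap p (a + a') x = linearizedMap p a x + linearizedMap p a' x := by
  simp [linearizedMap_apply, add_mul, sum_add_distrib]

lemma linearizedMap_single (t : ZMod n) (v x : F) :
    linearizedMap p (Pi.single t v) x = v * frob p t x := by
  classical
  simp [linearizedMap_apply, Pi.single_apply]

variable [Fintype F]

lemma linearizedMap_mul_frob (hF : Fintype.card F = p ^ n) (d : ZMod n → F) (t : ZMod n)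
    (v x : F) :
    linearizedMap p d (v * frob p t x) =
      linearizedMap p (fun s => d (s - t) * frob p (s - t) v) x := by
  simp only [linearizedMap_apply, map_mul, frob_frob hF, ← mul_assoc]
  exact (Fintype.sum_equiv (Equiv.subRight t) _ _ fun s => by simp).symm

lemma linearizedMap_injective (hF : Fintype.card F = p ^ n) :
    Injective (linearizedMap p : (ZMod n → F) → F →+ F) := by
  have hind : LinearIndependent F (fun i : ZMod n => ((frob p i : F →+* F) : F → F)) :=
    (linearIndependent_monoidHom F F).comp (fun i => (frob p i).toMonoidHom)
      fun i j hij => frob_injective hF (congrArg (⇑) hij)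
  intro a a' h
  funext i
  refine sub_eq_zero.mp (Fintype.linearIndependent_iff.mp hind (a - a') ?_ i)
  funext x
  simpa [sub_mul, sum_sub_distrib, linearizedMap_apply, sub_eq_zero] using
    DFunLike.congr_fun h x

lemma linearizedMap_surjective (hF : Fintype.card F = p ^ n) :
    Surjective (linearizedMap p : (ZMod n → F) → F →+ F) := by
  let := ZMod.algebra F p
  have : Finite (F →+ F) := Finite.of_injective _ DFunLike.coe_injective
  refine ((linearizedMap_injective hF).bijective_of_nat_card_le ?_).2
  rw [Nat.card_congr (AddMonoidHom.toZModLinearMapEquiv p).toEquiv,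
    Module.natCard_eq_pow_finrank (K := ZMod p), Module.finrank_linearMap,
    finrank_zmod_eq_of_card hF, Nat.card_fun, Nat.card_zmod, Nat.card_eq_fintype_card, hF, Nat.card_zmod, pow_mul]

lemma eq_of_forall_mul_frob_add_mul_frob (hF : Fintype.card F = p ^ n) {i j : ZMod n} (hij : i ≠ j)
    {u v u' v' : F}
    (h : ∀ x, u * frob p i x + v * frob p j x = u' * frob p i x + v' * frob p j x) : u = u' := by
  classical
  have hcoeff := linearizedMap_injective hF (a₁ := Pi.single i u + Pi.single j v)
    (a₂ := Pi.single i u' + Pi.single j v')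
    (AddMonoidHom.ext fun x => by simpa only [linearizedMap_add, linearizedMap_single] using h x)
  simpa [Pi.single_apply, hij] using congrFun hcoeff i

end Linearized

open QuadraticMap (polar)

lemma polar_pow_add_one {R : Type*} [CommRing R] (p : ℕ) [ExpChar R p] (m : ℕ) (x y : R) :
    polar (fun z : R => z ^ (p ^ m + 1)) x y = x ^ p ^ m * y + x * y ^ p ^ m := by
  simp only [polar, pow_succ, add_pow_expChar_pow]
  ring

lemma polar_map_mul_of_equiv {F : Type*} [Field F] (p : ℕ) [ExpChar F p] {e : ℕ} {f : F → F}
    (ℓ₀ ℓ₁ : F ≃+ F) (h : ∀ x, ℓ₀ (f x) = ℓ₁ x ^ (p ^ e + 1)) {ζ : F} (hζ : ζ ^ p ^ e = ζ)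
    (x y : F) : polar f (ℓ₁.symm (ζ * ℓ₁ x)) y = ℓ₀.symm (ζ * ℓ₀ (polar f x y)) := by
  have hpolar (u v : F) : ℓ₀ (polar f u v) = polar (fun z => z ^ (p ^ e + 1)) (ℓ₁ u) (ℓ₁ v) := by
    simp only [polar, map_sub, h, map_add]
  apply ℓ₀.injective
  rw [hpolar, ℓ₀.apply_symm_apply, hpolar, ℓ₁.apply_symm_apply, polar_pow_add_one,
    polar_pow_add_one, mul_pow, hζ]
  ring

lemma pow_succ_eq_of_mul_eq_mul_pow {F : Type*} [Field F] [Fintype F] {q : ℕ}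
    (hF : Fintype.card F = q ^ 2) {b c e : F} (he : e ≠ 0) (h : c * e = b * e ^ q) :
    c ^ (q + 1) = b ^ (q + 1) := by
  have hq : (e ^ q) ^ q = e := by rw [← pow_mul, ← sq, ← hF, FiniteField.pow_card]
  apply mul_right_cancel₀ (pow_ne_zero (q + 1) he)
  calc c ^ (q + 1) * e ^ (q + 1) = c * e * (c * e) ^ q := by ring
    _ = b * e ^ q * (b * e ^ q) ^ q := by rw [h]
    _ = b ^ (q + 1) * e ^ (q + 1) := by rw [mul_pow b, hq]; ring

section Multipliers

variable {F : Type*} [Field F] {p k : ℕ} [Fact p.Prime] [CharP F p]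

local notation "κ" => ((k : ℕ) : ZMod (4 * k))

lemma four_mul_natCast_self : 4 * κ = 0 := by
  exact_mod_cast ZMod.natCast_self (4 * k)

variable [NeZero k]

lemma natCast_mul_natCast_inj {i j : ℕ} (hi : i < 4) (hj : j < 4)
    (h : (i : ZMod (4 * k)) * κ = j * κ) : i = j := by
  have hk : 0 < k := Nat.pos_of_ne_zero (NeZero.ne k)
  rw [← Nat.cast_mul, ← Nat.cast_mul, ZMod.natCast_eq_natCast_iff', Nat.mod_eq_of_lt,
    Nat.mod_eq_of_lt] at h
  · exact Nat.eq_of_mul_eq_mul_right hk h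
  all_goals nlinarith

lemma natCast_multiples_pairwise_ne : κ ≠ 0 ∧ 2 * κ ≠ 0 ∧ 3 * κ ≠ 0 ∧
    2 * κ ≠ κ ∧ 3 * κ ≠ κ ∧ 3 * κ ≠ 2 * κ := by
  have hne {i j : ℕ} (hi : i < 4) (hj : j < 4) (hij : i ≠ j) :
      (i : ZMod (4 * k)) * κ ≠ j * κ := fun h => hij (natCast_mul_natCast_inj hi hj h)
  exact ⟨by simpa using hne (i := 1) (j := 0) (by norm_num) (by norm_num) (by norm_num),
    by simpa using hne (i := 2) (j := 0) (by norm_num) (by norm_num) (by norm_num),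
    by simpa using hne (i := 3) (j := 0) (by norm_num) (by norm_num) (by norm_num),
    by simpa using hne (i := 2) (j := 1) (by norm_num) (by norm_num) (by norm_num),
    by simpa using hne (i := 3) (j := 1) (by norm_num) (by norm_num) (by norm_num),
    by simpa using hne (i := 3) (j := 2) (by norm_num) (by norm_num) (by norm_num)⟩

variable (p k) in
def polarCoeff (b c x : F) : ZMod (4 * k) → F :=
  Pi.single (0 : ZMod (4 * k)) (frob p (2 * κ) x) + Pi.single (2 * κ) x +
    Pi.single (3 * κ) (2 * frob p κ b * frob p (3 * κ) x) +
    Pi.single κ (2 * frob p κ c * frob p κ x)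

section
variable (b c x : F)

lemma polarCoeff_zero : polarCoeff p k b c x 0 = frob p (2 * κ) x := by
  obtain ⟨h1, h2, h3, -⟩ := natCast_multiples_pairwise_ne (k := k)
  simp [polarCoeff, h1.symm, h2.symm, h3.symm]

lemma polarCoeff_natCast : polarCoeff p k b c x κ = 2 * frob p κ c * frob p κ x := by
  obtain ⟨h1, -, -, h21, h31, -⟩ := natCast_multiples_pairwise_ne (k := k)
  simp [polarCoeff, h1, h21.symm, h31.symm]

lemma polarCoeff_two_mul : polarCoeff p k b c x (2 * κ) = x := by
  obtain ⟨-, h2, -, h21, -, h32⟩ := natCast_multiples_pairwise_ne (k := k)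
  simp [polarCoeff, h2, h21, h32.symm]

lemma polarCoeff_three_mul :
    polarCoeff p k b c x (3 * κ) = 2 * frob p κ b * frob p (3 * κ) x := by
  obtain ⟨-, -, h3, -, h31, h32⟩ := natCast_multiples_pairwise_ne (k := k)
  simp [polarCoeff, h3, h31, h32]

end

variable [Fintype F] (hF : Fintype.card F = p ^ (4 * k)) {b c : F} {f : F → F}
  (hf : ∀ x, f x = x ^ (p ^ (2 * k) + 1) + (b * (x ^ 2) ^ p ^ (2 * k) + c * x ^ 2) ^ p ^ k)
include hF hf

lemma polar_eq_linearizedMap (x y : F) :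
    polar f x y = linearizedMap p (polarCoeff p k b c x) y := by
  have hfrob (m : ℕ) (z : F) : z ^ p ^ m = frob p (m : ZMod (4 * k)) z := pow_pow_eq_frob hF m z
  simp only [polarCoeff, linearizedMap_add, linearizedMap_single, frob_zero, polar, hf, pow_succ,
    hfrob, map_add, map_mul, map_pow, frob_frob hF]
  push_cast
  have h3 : κ + 2 * κ = 3 * κ := by ring
  rw [h3]
  ring

lemma linearizedMap_polar (d : ZMod (4 * k) → F) (x y : F) :
    linearizedMap p d (polar f x y) = linearizedMap p (fun s =>
      (d s + d (s + 2 * κ)) * frob p (s + 2 * κ) x +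
        2 * (d (s + κ) * frob p (s + 2 * κ) b + d (s + 3 * κ) * frob p s c) * frob p s x) y := by
  simp only [polar_eq_linearizedMap hF hf, polarCoeff, linearizedMap_add, linearizedMap_single,
    map_add, linearizedMap_mul_frob hF]
  simp only [← linearizedMap_add]
  congr 2
  funext s
  have h4 : 4 * κ = 0 := four_mul_natCast_self
  simp only [Pi.add_apply, map_mul, map_ofNat, frob_frob hF, sub_zero, sub_add_cancel]
  rw [show s - 3 * κ + κ = s + 2 * κ by linear_combination -h4,
    show s - 2 * κ = s + 2 * κ by linear_combination -h4,
    show s - 3 * κ = s + κ by linear_combination -h4,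
    show s - κ = s + 3 * κ by linear_combination -h4]
  ring

lemma polarCoeff_eq_of_polar_eq {d : ZMod (4 * k) → F} {u x : F}
    (h : ∀ y, polar f u y = linearizedMap p d (polar f x y)) :
    polarCoeff p k b c u = fun s => (d s + d (s + 2 * κ)) * frob p (s + 2 * κ) x +
      2 * (d (s + κ) * frob p (s + 2 * κ) b + d (s + 3 * κ) * frob p s c) * frob p s x := by
  refine linearizedMap_injective hF (AddMonoidHom.ext fun y => ?_)
  rw [← polar_eq_linearizedMap hF hf, h, linearizedMap_polar hF hf]

/- Comparing the coefficients of `y ^ p ^ (2k)` gives `P x = D * x + E * x ^ q`; those of `y`,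
`y ^ p ^ k` and `y ^ p ^ (3k)` then give `D ^ q = D` and `c * E = b * E ^ q`. -/
lemma exists_eq_mul_add_mul_pow_of_polar_map (hp : p ≠ 2) (P P₀ : F →+ F)
    (h : ∀ x y, polar f (P x) y = P₀ (polar f x y)) :
    ∃ D E : F, D ^ p ^ (2 * k) = D ∧ c * E = b * E ^ p ^ (2 * k) ∧
      ∀ x, P x = D * x + E * x ^ p ^ (2 * k) := by
  obtain ⟨d, rfl⟩ := linearizedMap_surjective hF P₀
  obtain ⟨C, hC⟩ : ∃ C : ZMod (4 * k) → F, ∀ x s, polarCoeff p k b c (P x) s =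
      (d s + d (s + 2 * κ)) * frob p (s + 2 * κ) x + C s * frob p s x :=
    ⟨_, fun x s => congrFun (polarCoeff_eq_of_polar_eq hF hf (h x)) s⟩
  have h4 : 4 * κ = 0 := four_mul_natCast_self
  have h22 : 2 * κ + 2 * κ = 0 := by linear_combination h4
  have h12 : κ + 2 * κ = 3 * κ := by ring
  have h32 : 3 * κ + 2 * κ = κ := by linear_combination h4
  have hq (z : F) : z ^ p ^ (2 * k) = frob p (2 * κ) z := by
    rw [pow_pow_eq_frob hF]
    push_cast
    rfl
  obtain ⟨-, h2, -, -, h31, -⟩ := natCast_multiples_pairwise_ne (k := k)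
  set D := d (2 * κ) + d 0
  set E := C (2 * κ)
  have hP (x : F) : P x = D * x + E * frob p (2 * κ) x := by
    simpa [polarCoeff_two_mul, h22] using hC x (2 * κ)
  have hD : frob p (2 * κ) D = d 0 + d (2 * κ) := by
    refine eq_of_forall_mul_frob_add_mul_frob hF h2 (v := frob p (2 * κ) E) (v' := C 0) fun x => ?_
    have := hC x 0
    simp only [polarCoeff_zero, hP, map_add, map_mul, frob_frob hF, h22, zero_add] at this
    linear_combination this
  have hEc : 2 * frob p κ c * frob p κ E = d κ + d (3 * κ) := by
    refine eq_of_forall_mul_frob_add_mul_frob hF h31 (v := 2 * frob p κ c * frob p κ D)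
      (v' := C κ) fun x => ?_
    have := hC x κ
    simp only [polarCoeff_natCast, hP, map_add, map_mul, frob_frob hF, h12] at this
    linear_combination this
  have hEb : 2 * frob p κ b * frob p (3 * κ) E = d (3 * κ) + d κ := by
    refine eq_of_forall_mul_frob_add_mul_frob hF h31.symm
      (v := 2 * frob p κ b * frob p (3 * κ) D) (v' := C (3 * κ)) fun x => ?_
    have := hC x (3 * κ)
    simp only [polarCoeff_three_mul, hP, map_add, map_mul, frob_frob hF, h32] at this
    linear_combination this
  refine ⟨D, E, by rw [hq, hD, add_comm], ?_, fun x => by rw [hP, hq]⟩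
  have h2 : (2 : F) ≠ 0 := Ring.two_ne_zero (by rwa [ringChar.eq F p])
  apply (frob p κ).injective
  apply mul_left_cancel₀ h2
  rw [hq, map_mul, map_mul, frob_frob hF, h12]
  linear_combination hEc - hEb

theorem exists_eq_mul_of_polar_map (hp : p ≠ 2)
    (hbc : b ^ (p ^ (2 * k) + 1) ≠ c ^ (p ^ (2 * k) + 1)) (P P₀ : F →+ F)
    (h : ∀ x y, polar f (P x) y = P₀ (polar f x y)) :
    ∃ D : F, D ^ p ^ (2 * k) = D ∧ ∀ x, P x = D * x := by
  obtain ⟨D, E, hD, hcE, hP⟩ := exists_eq_mul_add_mul_pow_of_polar_map hF hf hp P P₀ h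
  have hE : E = 0 := by
    by_contra hE
    refine hbc (pow_succ_eq_of_mul_eq_mul_pow ?_ hE hcE).symm
    rw [hF, ← pow_mul]
    ring_nf
  exact ⟨D, hD, fun x => by rw [hP, hE, zero_mul, add_zero]⟩

theorem exists_map_mul_eq_mul_of_equiv (hp : p ≠ 2)
    (hbc : b ^ (p ^ (2 * k) + 1) ≠ c ^ (p ^ (2 * k) + 1)) (ℓ₀ ℓ₁ : F ≃+ F) {e : ℕ}
    (h : ∀ x, ℓ₀ (f x) = ℓ₁ x ^ (p ^ e + 1)) {ζ : F} (hζ : ζ ^ p ^ e = ζ) :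
    ∃ D : F, D ^ p ^ (2 * k) = D ∧ ∀ x, ℓ₁ (D * x) = ζ * ℓ₁ x := by
  obtain ⟨D, hD, hP⟩ := exists_eq_mul_of_polar_map hF hf hp hbc
    ((ℓ₁.symm.toAddMonoidHom.comp (AddMonoidHom.mulLeft ζ)).comp ℓ₁.toAddMonoidHom)
    ((ℓ₀.symm.toAddMonoidHom.comp (AddMonoidHom.mulLeft ζ)).comp ℓ₀.toAddMonoidHom)
    (polar_map_mul_of_equiv p ℓ₀ ℓ₁ h hζ)
  refine ⟨D, hD, fun x => ?_⟩
  rw [← hP x]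
  simp

end Multipliers

lemma orderOf_eq_of_map_mul {F : Type*} [Field F] (ℓ : F ≃+ F) {D ζ : F}
    (h : ∀ x, ℓ (D * x) = ζ * ℓ x) : orderOf D = orderOf ζ := by
  have hpow (n : ℕ) (x : F) : ℓ (D ^ n * x) = ζ ^ n * ℓ x := by
    induction n generalizing x with
    | zero => simp
    | succ n ih => rw [pow_succ, mul_assoc, ih, h, pow_succ, mul_assoc]
  have hℓ1 : ℓ 1 ≠ 0 := by simp
  refine orderOf_eq_orderOf_iff.mpr fun n => ⟨fun hD => ?_, fun hζ => ?_⟩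
  · refine mul_right_cancel₀ hℓ1 ?_
    rw [← hpow, hD, one_mul, one_mul]
  · refine mul_right_cancel₀ (one_ne_zero (α := F)) ?_
    rw [← ℓ.injective.eq_iff, hpow, hζ, one_mul, one_mul]

lemma exists_pow_pow_eq_self_orderOf_eq {F : Type*} [Field F] [Fintype F] {p N : ℕ}
    (hp : p.Prime) (hF : Fintype.card F = p ^ N) (e : ℕ) :
    ∃ ζ : F, ζ ^ p ^ e = ζ ∧ orderOf ζ = p ^ Nat.gcd e N - 1 := by
  classical
  have hgcd := Nat.pow_sub_one_gcd_pow_sub_one p e N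
  set d := p ^ Nat.gcd e N - 1
  obtain ⟨u, hu⟩ := IsCyclic.exists_ofOrder_eq_natCard (α := Fˣ)
  rw [Nat.card_eq_fintype_card, Fintype.card_units, hF] at hu
  have hN : 0 < p ^ N - 1 := hu ▸ orderOf_pos u
  have hd_pos : 0 < d := Nat.sub_pos_of_lt (Nat.one_lt_pow
    (Nat.gcd_pos_of_pos_right e (Nat.pos_of_ne_zero fun h => by simp [h] at hN)).ne' hp.one_lt)
  have hd : d ∣ p ^ N - 1 := hgcd ▸ Nat.gcd_dvd_right _ _
  have hord : orderOf ((u ^ ((p ^ N - 1) / d) : Fˣ) : F) = d := by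
    rw [orderOf_units, orderOf_pow_of_dvd (Nat.div_pos (Nat.le_of_dvd hN hd) hd_pos).ne'
      (by rw [hu]; exact Nat.div_dvd_of_dvd hd), hu, Nat.div_div_self hd hN.ne']
  refine ⟨_, ?_, hord⟩
  have hζ := orderOf_dvd_iff_pow_eq_one.mp (hord ▸ hgcd ▸ Nat.gcd_dvd_left _ _ : _ ∣ p ^ e - 1)
  rw [← Nat.sub_add_cancel (Nat.one_le_pow e p hp.pos), pow_succ, hζ, one_mul]

lemma dvd_of_pow_sub_one_dvd_pow_sub_one {p a b : ℕ} (hp : 2 ≤ p) (h : p ^ a - 1 ∣ p ^ b - 1) :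
    a ∣ b := by
  have hgcd := Nat.pow_sub_one_gcd_pow_sub_one p a b
  rw [Nat.gcd_eq_left h] at hgcd
  have h1 := Nat.one_le_pow a p (by omega)
  have h2 := Nat.one_le_pow (Nat.gcd a b) p (by omega)
  have := Nat.pow_right_injective hp (show p ^ a = p ^ Nat.gcd a b by omega)
  exact this ▸ Nat.gcd_dvd_right a b

lemma orderOf_dvd_sub_one_of_pow_eq_self {F : Type*} [Field F] {D : F} {q : ℕ} (hq : 0 < q)
    (hD : 0 < orderOf D) (h : D ^ q = D) : orderOf D ∣ q - 1 := by
  have hD0 : D ≠ 0 := by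
    rintro rfl
    simp at hD
  refine orderOf_dvd_of_pow_eq_one (mul_right_cancel₀ hD0 ?_)
  rw [← pow_succ, Nat.sub_add_cancel hq, h, one_mul]

/-- with `m = 2k`, `q = p^m`, `N(b) ≠ N(c)` and
`ℓ(x) = (b·x^q + c·x)^{p^k}`, the planar function `f(x) = x^{q+1} + ℓ(x²)` is not
linearly equivalent to any planar monomial `x^{p^e+1}` (those with `2m/gcd(e,2m)` odd). -/
theorem planar_not_equivalent_to_any_monomial
    (p k : ℕ) (hp : p.Prime) (hodd : Odd p) (hk : 0 < k)
    (m : ℕ) (hm : m = 2 * k)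
    (q : ℕ) (hq : q = p ^ m)
    (F : Type*) [Field F] [Fintype F] (hF : Fintype.card F = q ^ 2)
    (b c : F) (hbc : b ^ (q + 1) ≠ c ^ (q + 1))
    (ℓ : F → F) (hℓ : ∀ x, ℓ x = (b * x ^ q + c * x) ^ p ^ k)
    (f : F → F) (hf : ∀ x, f x = x ^ (q + 1) + ℓ (x ^ 2)) :
    ∀ e : ℕ, Odd (2 * m / Nat.gcd e (2 * m)) →
      ¬∃ ℓ₀ ℓ₁ : F → F,
        (∀ x y, ℓ₀ (x + y) = ℓ₀ x + ℓ₀ y) ∧ Function.Bijective ℓ₀ ∧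
        (∀ x y, ℓ₁ (x + y) = ℓ₁ x + ℓ₁ y) ∧ Function.Bijective ℓ₁ ∧
        (∀ x : F, ℓ₀ (f x) = (ℓ₁ x) ^ (p ^ e + 1)) := by
  rintro e he ⟨ℓ₀, ℓ₁, hℓ₀, hℓ₀_bij, hℓ₁, hℓ₁_bij, hequiv⟩
  subst hm hq
  have : Fact p.Prime := ⟨hp⟩
  have : NeZero k := ⟨hk.ne'⟩
  have hF' : Fintype.card F = p ^ (2 * (2 * k)) := by rw [hF, ← pow_mul, mul_comm]
  have : CharP F p := charP_of_card_eq_prime_pow hF'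
  obtain ⟨ζ, hζ, hζ_ord⟩ := exists_pow_pow_eq_self_orderOf_eq hp hF' e
  obtain ⟨D, hD, hDζ⟩ := exists_map_mul_eq_mul_of_equiv (by rw [hF']; ring_nf)
    (fun x => by rw [hf, hℓ]) (by rintro rfl; exact absurd hodd (by decide)) hbc
    (AddEquiv.ofBijective (AddMonoidHom.mk' ℓ₀ hℓ₀) hℓ₀_bij)
    (AddEquiv.ofBijective (AddMonoidHom.mk' ℓ₁ hℓ₁) hℓ₁_bij) hequiv hζ
  have hD_ord : orderOf D = p ^ Nat.gcd e (2 * (2 * k)) - 1 :=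
    (orderOf_eq_of_map_mul _ hDζ).trans hζ_ord
  have hg : 0 < Nat.gcd e (2 * (2 * k)) := Nat.gcd_pos_of_pos_right e (by omega)
  have hdvd := hD_ord ▸ orderOf_dvd_sub_one_of_pow_eq_self (pow_pos hp.pos _)
    (hD_ord ▸ Nat.sub_pos_of_lt (Nat.one_lt_pow hg.ne' hp.one_lt)) hD
  rw [Nat.mul_div_assoc 2 (dvd_of_pow_sub_one_dvd_pow_sub_one hp.two_le hdvd)] at he
  exact Nat.not_odd_iff_even.mpr (even_two_mul _) he
end
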